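/- arXiv:2510.25541 — 6 statements merged into one kernel-verified Lean document; each statement's English description precedes it below -/
import Mathlib

section
/- Let A be a real k×d matrix and x ∈ ℝ^d, and let M be the k×d matrix whose j-th column is M^{(j)} = A^{(j)} x_j (the j-th column of A scaled by x_j). Then ‖M‖_{2→2} ≤ ‖x‖₄ · ‖Aᵀ‖_{2→4}. -/
open MeasureTheory ProbabilityTheory Real Finset

/-- The ℓ_p norm of a vector in ℝ^n. -/
noncomputable def lpNorm {n : ℕ} (p : ℝ) (x : Fin n → ℝ) : ℝ :=
  (∑ i, |x i| ^ p) ^ (1 / p)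

/-- The ℓ_p → ℓ_q operator norm of a matrix. -/
noncomputable def opNorm {m n : ℕ} (p q : ℝ) (B : Matrix (Fin m) (Fin n) ℝ) : ℝ :=
  sSup {c : ℝ | ∃ u : Fin n → ℝ, lpNorm p u = 1 ∧ c = lpNorm q (B.mulVec u)}

/-- The standard Gaussian cumulative distribution function. -/
noncomputable def stdGaussianCDF (t : ℝ) : ℝ :=
  ((gaussianReal 0 1) (Set.Iic t)).toReal

/-- β_p, defined by β_p ^ p = E |Z| ^ p for Z a standard Gaussian. -/
noncomputable def betaP (p : ℝ) : ℝ :=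
  (∫ z, |z| ^ p ∂(gaussianReal 0 1)) ^ (1 / p)

/-- A constant `C₀ > 0` is a Berry–Esseen constant if for every finite sequence of independent
symmetric real random variables with unit total variance, the distribution function of the sum
is close to the standard Gaussian one, with a nonuniform error bound. -/
def IsBerryEsseenConst (C₀ : ℝ) : Prop :=
  0 < C₀ ∧
  ∀ (Ω : Type) (_ : MeasureSpace Ω), IsProbabilityMeasure (ℙ : Measure Ω) →
    ∀ (m : ℕ) (X : Fin m → Ω → ℝ),
    (∀ j, Measurable (X j)) →
    iIndepFun X ℙ →
    (∀ j, Measure.map (X j) ℙ = Measure.map (fun ω => -(X j ω)) ℙ) →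
    (∀ j, Integrable (fun ω => |X j ω| ^ (3 : ℕ)) ℙ) →
    (∑ j, ∫ ω, (X j ω) ^ 2 ∂ℙ) = 1 →
    ∀ t : ℝ, |(ℙ {ω | (∑ j, X j ω) ≤ t}).toReal - stdGaussianCDF t| ≤
      C₀ / (1 + |t| ^ 3) * ∑ j, ∫ ω, |X j ω| ^ 3 ∂ℙ

/-- A uniform random sign (Rademacher) vector: independent coordinates, each ±1 with
probability 1/2. -/
def IsRademacherVector {Ω : Type} [MeasureSpace Ω] {d : ℕ} (ξ : Ω → Fin d → ℝ) : Prop :=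
  (∀ j, Measurable (fun ω => ξ ω j)) ∧
  iIndepFun (fun j ω => ξ ω j) ℙ ∧
  (∀ ω j, ξ ω j = 1 ∨ ξ ω j = -1) ∧
  (∀ j, ℙ {ω | ξ ω j = 1} = 1/2)

/-- A signed matrix is 4-wise independent if each sign pattern occurs in exactly `d/16`
columns, for every choice of four distinct rows. -/
def IsFourWiseIndependent {k d : ℕ} (A : Matrix (Fin k) (Fin d) ℝ) : Prop :=
  (∀ i j, A i j = 1 ∨ A i j = -1) ∧
  ∀ i₁ i₂ i₃ i₄ : Fin k, i₁ < i₂ → i₂ < i₃ → i₃ < i₄ →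
    ∀ b₁ b₂ b₃ b₄ : ℝ, (b₁ = 1 ∨ b₁ = -1) → (b₂ = 1 ∨ b₂ = -1) →
      (b₃ = 1 ∨ b₃ = -1) → (b₄ = 1 ∨ b₄ = -1) →
    (Finset.univ.filter
        (fun j => A i₁ j = b₁ ∧ A i₂ j = b₂ ∧ A i₃ j = b₃ ∧ A i₄ j = b₄)).card = d / 16

/-- The Walsh–Hadamard matrix (for `d` a power of two this agrees with the usual recursive
Sylvester construction `H_{2ℓ} = 2^{-1/2} [[H_ℓ, H_ℓ], [H_ℓ, -H_ℓ]]`). -/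
noncomputable def walshHadamard (d : ℕ) : Matrix (Fin d) (Fin d) ℝ :=
  fun i j =>
    (-1 : ℝ) ^ (∑ l ∈ Finset.range d, (i.val / 2 ^ l % 2) * (j.val / 2 ^ l % 2)) / Real.sqrt d

lemma abs_rpow_two (a : ℝ) : |a| ^ (2:ℝ) = a ^ 2 := by
  rw [show (2:ℝ) = ((2:ℕ):ℝ) by norm_num, Real.rpow_natCast, sq_abs]

lemma abs_rpow_four (a : ℝ) : |a| ^ (4:ℝ) = a ^ 4 := by
  rw [show (4:ℝ) = ((4:ℕ):ℝ) by norm_num, Real.rpow_natCast, pow_abs,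
    abs_of_nonneg (by positivity)]

lemma lpNorm_two_eq {n : ℕ} (u : Fin n → ℝ) :
    lpNorm 2 u = Real.sqrt (∑ i, u i ^ 2) := by
  rw [_root_.lpNorm, Real.sqrt_eq_rpow]
  congr 1
  exact Finset.sum_congr rfl fun i _ => abs_rpow_two _

lemma lpNorm_four_eq {n : ℕ} (u : Fin n → ℝ) :
    lpNorm 4 u = (∑ i, u i ^ 4) ^ ((1:ℝ)/4) := by
  rw [_root_.lpNorm]
  congr 1
  exact Finset.sum_congr rfl fun i _ => abs_rpow_four _

/-- If the columns of `M` are the columns of `A` scaled by the entries of `x`,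
then `‖M‖_{2→2} ≤ ‖x‖₄ ‖Aᵀ‖_{2→4}`. -/
theorem opNorm_column_scaled_le
    {k d : ℕ} (A : Matrix (Fin k) (Fin d) ℝ) (x : Fin d → ℝ) :
    opNorm 2 2 (Matrix.of fun i j => A i j * x j) ≤ lpNorm 4 x * opNorm 2 4 A.transpose := by
  classical
  unfold opNorm
  set sA : Set ℝ :=
    {c : ℝ | ∃ u : Fin k → ℝ, lpNorm 2 u = 1 ∧ c = lpNorm 4 (A.transpose.mulVec u)} with hsA
  have hx4 : 0 ≤ lpNorm 4 x := by rw [lpNorm_four_eq]; positivity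
  have hgj : ∀ (v : Fin k → ℝ) (j : Fin d),
      A.transpose.mulVec v j = ∑ i, A i j * v i := by
    intro v j
    simp [Matrix.mulVec, dotProduct, Matrix.transpose_apply]
  have hbdd : BddAbove sA := by
    refine ⟨(∑ j, (∑ i, (A i j) ^ 2) ^ 2) ^ ((1:ℝ)/4), ?_⟩
    rintro c ⟨v, hv, rfl⟩
    rw [lpNorm_two_eq] at hv
    have hv2 : ∑ i, v i ^ 2 = 1 := Real.sqrt_eq_one.mp hv
    rw [lpNorm_four_eq]
    refine Real.rpow_le_rpow (by positivity) ?_ (by norm_num)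
    refine Finset.sum_le_sum fun j _ => ?_
    have hcs : (∑ i, A i j * v i) ^ 2 ≤ (∑ i, (A i j) ^ 2) * (∑ i, v i ^ 2) :=
      Finset.sum_mul_sq_le_sq_mul_sq _ _ _
    rw [hv2, mul_one] at hcs
    calc (A.transpose.mulVec v j) ^ 4 = ((∑ i, A i j * v i) ^ 2) ^ 2 := by rw [hgj]; ring
    _ ≤ (∑ i, (A i j) ^ 2) ^ 2 := pow_le_pow_left₀ (sq_nonneg _) hcs 2
  have hop_nn : 0 ≤ sSup sA := by
    refine Real.sSup_nonneg ?_
    rintro c ⟨v, _, rfl⟩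
    rw [lpNorm_four_eq]; positivity
  refine Real.sSup_le ?_ (mul_nonneg hx4 hop_nn)
  rintro c ⟨u, hu, rfl⟩
  have hu2 : ∑ j, u j ^ 2 = 1 := by
    rw [lpNorm_two_eq] at hu; exact Real.sqrt_eq_one.mp hu
  set w : Fin k → ℝ := (Matrix.of fun i j => A i j * x j).mulVec u with hw
  have hwi : ∀ i, w i = ∑ j, A i j * x j * u j := by
    intro i; simp [hw, Matrix.mulVec, dotProduct]
  rw [lpNorm_two_eq]
  set N : ℝ := Real.sqrt (∑ i, w i ^ 2) with hN
  rcases eq_or_lt_of_le (Real.sqrt_nonneg (∑ i, w i ^ 2)) with h0 | hNpos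
  · rw [hN, ← h0]; exact mul_nonneg hx4 hop_nn
  · have hWsum : N ^ 2 = ∑ i, w i ^ 2 := Real.sq_sqrt (by positivity)
    set v : Fin k → ℝ := fun i => w i / N with hv
    have hv2 : ∑ i, v i ^ 2 = 1 := by
      simp_rw [hv, div_pow, ← Finset.sum_div, ← hWsum]
      exact div_self (by positivity)
    have hvnorm : lpNorm 2 v = 1 := by rw [lpNorm_two_eq, hv2, Real.sqrt_one]
    set g : Fin k → ℝ → ℝ := fun _ _ => 0 with _hdummy
    set gv : Fin d → ℝ := A.transpose.mulVec v with hgv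
    have hmem : lpNorm 4 gv ∈ sA := ⟨v, hvnorm, rfl⟩
    have hgle : lpNorm 4 gv ≤ sSup sA := le_csSup hbdd hmem
    have key : ∑ i, v i * w i = ∑ j, u j * (x j * gv j) := by
      simp_rw [hwi, Finset.mul_sum]
      rw [Finset.sum_comm]
      refine Finset.sum_congr rfl fun j _ => ?_
      rw [hgv, hgj v j, Finset.mul_sum, Finset.mul_sum]
      exact Finset.sum_congr rfl fun i _ => by ring
    have hNval : N = ∑ j, u j * (x j * gv j) := by
      rw [← key]
      have h1 : ∑ i, v i * w i = (∑ i, w i ^ 2) / N := by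
        rw [Finset.sum_div]
        refine Finset.sum_congr rfl fun i _ => ?_
        rw [hv]; field_simp
      rw [h1, ← hWsum, sq, mul_div_assoc, div_self hNpos.ne', mul_one]
    have cs1 : N ^ 2 ≤ ∑ j, (x j * gv j) ^ 2 := by
      calc N ^ 2 = (∑ j, u j * (x j * gv j)) ^ 2 := by rw [hNval]
      _ ≤ (∑ j, u j ^ 2) * (∑ j, (x j * gv j) ^ 2) :=
          Finset.sum_mul_sq_le_sq_mul_sq _ _ _
      _ = ∑ j, (x j * gv j) ^ 2 := by rw [hu2, one_mul]
    have cs2 : (∑ j, (x j * gv j) ^ 2) ^ 2 ≤ (∑ j, x j ^ 4) * (∑ j, gv j ^ 4) := by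
      have h := Finset.sum_mul_sq_le_sq_mul_sq Finset.univ
        (fun j => x j ^ 2) (fun j => gv j ^ 2)
      have e1 : ∀ j : Fin d, x j ^ 2 * gv j ^ 2 = (x j * gv j) ^ 2 := fun j => by ring
      have e2 : ∀ j : Fin d, (x j ^ 2) ^ 2 = x j ^ 4 := fun j => by ring
      have e3 : ∀ j : Fin d, (gv j ^ 2) ^ 2 = gv j ^ 4 := fun j => by ring
      simp_rw [e1, e2, e3] at h
      exact h
    have hN4 : N ^ 4 ≤ (∑ j, x j ^ 4) * (∑ j, gv j ^ 4) := by
      calc N ^ 4 = (N ^ 2) ^ 2 := by ring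
      _ ≤ (∑ j, (x j * gv j) ^ 2) ^ 2 := pow_le_pow_left₀ (sq_nonneg _) cs1 2
      _ ≤ _ := cs2
    have han : (0:ℝ) ≤ ∑ j, x j ^ 4 := by positivity
    have hbn : (0:ℝ) ≤ ∑ j, gv j ^ 4 := by positivity
    have hfin : N ≤ (∑ j, x j ^ 4) ^ ((1:ℝ)/4) * (∑ j, gv j ^ 4) ^ ((1:ℝ)/4) := by
      rw [← pow_le_pow_iff_left₀ hNpos.le (by positivity) (n := 4) (by norm_num)]
      have h1 : ((∑ j, x j ^ 4) ^ ((1:ℝ)/4) * (∑ j, gv j ^ 4) ^ ((1:ℝ)/4)) ^ (4:ℕ)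
          = (∑ j, x j ^ 4) * (∑ j, gv j ^ 4) := by
        rw [mul_pow, ← Real.rpow_natCast ((∑ j, x j ^ 4) ^ ((1:ℝ)/4)) 4,
          ← Real.rpow_natCast ((∑ j, gv j ^ 4) ^ ((1:ℝ)/4)) 4,
          ← Real.rpow_mul han, ← Real.rpow_mul hbn]
        norm_num
      rw [h1]; exact hN4
    calc N ≤ (∑ j, x j ^ 4) ^ ((1:ℝ)/4) * (∑ j, gv j ^ 4) ^ ((1:ℝ)/4) := hfin
    _ = lpNorm 4 x * lpNorm 4 gv := by rw [lpNorm_four_eq, lpNorm_four_eq]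
    _ ≤ lpNorm 4 x * sSup sA := mul_le_mul_of_nonneg_left hgle hx4
end

section
/- Let A ∈ {+1,−1}^{k×d} be a 4-wise independent signed matrix (with 16 dividing d and k ≥ 4). Then ‖Aᵀ‖_{2→4} ≤ (3d)^{1/4}. -/
open MeasureTheory ProbabilityTheory Real Finset

section FourWiseAux

lemma sum_pow_four {n : ℕ} (c : Fin n → ℝ) :
    (∑ i, c i) ^ 4 = ∑ i1, ∑ i2, ∑ i3, ∑ i4, c i1 * c i2 * c i3 * c i4 := by
  calc (∑ i, c i)^4 = (∑ i, c i)*(∑ i, c i)*((∑ i, c i)*(∑ i, c i)) := by ring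
  _ = (∑ i1, ∑ i2, c i1 * c i2) * (∑ i1, ∑ i2, c i1 * c i2) := by rw [Finset.sum_mul_sum]
  _ = ∑ i1, ∑ i3, (∑ i2, c i1 * c i2) * (∑ i4, c i3 * c i4) := by rw [Finset.sum_mul_sum]
  _ = ∑ i1, ∑ i3, ∑ i2, ∑ i4, c i1 * c i2 * (c i3 * c i4) := by simp_rw [Finset.sum_mul_sum]
  _ = ∑ i1, ∑ i2, ∑ i3, ∑ i4, c i1 * c i2 * c i3 * c i4 := by
      refine Finset.sum_congr rfl fun i1 _ => ?_
      rw [Finset.sum_comm]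
      exact Finset.sum_congr rfl fun i2 _ => Finset.sum_congr rfl fun i3 _ =>
        Finset.sum_congr rfl fun i4 _ => by ring

lemma quad_sum_eq {n : ℕ} (u : Fin n → ℝ) (d : ℝ) :
  ∑ i1, ∑ i2, ∑ i3, ∑ i4, (u i1*u i2*u i3*u i4) * (d * ((if i1 = i2 then (1:ℝ) else 0) * (if i3 = i4 then 1 else 0) + (if i1 = i3 then 1 else 0)*(if i2=i4 then 1 else 0) + (if i1 = i4 then 1 else 0)*(if i2 = i3 then 1 else 0) - 2*((if i1 = i2 then 1 else 0)*(if i1=i3 then 1 else 0)*(if i1=i4 then 1 else 0))))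
  = d * (3 * ((∑ i, u i^2) * (∑ i, u i^2)) - 2 * ∑ i, u i^4) := by
  simp only [mul_ite, mul_one, mul_zero, ite_mul, zero_mul, one_mul, mul_sub, mul_add,
    Finset.sum_ite_eq, Finset.sum_ite_eq', Finset.mem_univ, if_true, Finset.sum_ite_irrel, Finset.sum_const_zero,
    Finset.sum_sub_distrib, Finset.sum_add_distrib]
  rw [Finset.sum_mul_sum]
  have e1 : ∑ x : Fin n, ∑ y : Fin n, u x * u x * u y * u y * d
      = (∑ x : Fin n, ∑ y : Fin n, u x ^ 2 * u y ^ 2) * d := by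
    simp_rw [show ∀ x y : Fin n, u x * u x * u y * u y * d = u x ^ 2 * u y ^ 2 * d from fun x y => by ring,
      ← Finset.sum_mul]
  have e2 : ∑ x : Fin n, ∑ y : Fin n, u x * u y * u x * u y * d
      = (∑ x : Fin n, ∑ y : Fin n, u x ^ 2 * u y ^ 2) * d := by
    simp_rw [show ∀ x y : Fin n, u x * u y * u x * u y * d = u x ^ 2 * u y ^ 2 * d from fun x y => by ring,
      ← Finset.sum_mul]
  have e3 : ∑ x : Fin n, ∑ y : Fin n, u x * u y * u y * u x * d
      = (∑ x : Fin n, ∑ y : Fin n, u x ^ 2 * u y ^ 2) * d := by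
    simp_rw [show ∀ x y : Fin n, u x * u y * u y * u x * d = u x ^ 2 * u y ^ 2 * d from fun x y => by ring,
      ← Finset.sum_mul]
  have e4 : ∑ x : Fin n, u x * u x * u x * u x * (d * 2)
      = (∑ x : Fin n, u x ^ 4) * (d * 2) := by
    simp_rw [show ∀ x : Fin n, u x * u x * u x * u x * (d * 2) = u x ^ 4 * (d * 2) from
      fun x => by ring, ← Finset.sum_mul]
  rw [e1, e2, e3, e4]
  ring

variable {k d : ℕ} (A : Matrix (Fin k) (Fin d) ℝ)

lemma mem_pm (hA : IsFourWiseIndependent A) (i : Fin k) (j : Fin d) :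
    A i j ∈ ({1, -1} : Finset ℝ) := by
  rcases hA.1 i j with h | h <;> simp [h]

lemma sum_pattern (hA : IsFourWiseIndependent A)
    {i₁ i₂ i₃ i₄ : Fin k} (h12 : i₁ < i₂) (h23 : i₂ < i₃) (h34 : i₃ < i₄)
    (g : ℝ → ℝ → ℝ → ℝ → ℝ) :
    ∑ j, g (A i₁ j) (A i₂ j) (A i₃ j) (A i₄ j)
      = ((d / 16 : ℕ) : ℝ) *
        ∑ b ∈ ({1,-1} : Finset ℝ) ×ˢ ({1,-1} : Finset ℝ) ×ˢ ({1,-1} : Finset ℝ) ×ˢ ({1,-1} : Finset ℝ),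
          g b.1 b.2.1 b.2.2.1 b.2.2.2 := by
  classical
  rw [← Finset.sum_fiberwise_of_maps_to (g := fun j => (A i₁ j, A i₂ j, A i₃ j, A i₄ j))
      (fun j _ => Finset.mem_product.2 ⟨mem_pm A hA _ _, Finset.mem_product.2
        ⟨mem_pm A hA _ _, Finset.mem_product.2 ⟨mem_pm A hA _ _, mem_pm A hA _ _⟩⟩⟩)
      (fun j => g (A i₁ j) (A i₂ j) (A i₃ j) (A i₄ j)),
    Finset.mul_sum]
  refine Finset.sum_congr rfl fun b hb => ?_
  simp only [Finset.mem_product] at hb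
  obtain ⟨hb1, hb2, hb3, hb4⟩ := hb
  have hb1' : b.1 = 1 ∨ b.1 = -1 := by simpa using hb1
  have hb2' : b.2.1 = 1 ∨ b.2.1 = -1 := by simpa using hb2
  have hb3' : b.2.2.1 = 1 ∨ b.2.2.1 = -1 := by simpa using hb3
  have hb4' : b.2.2.2 = 1 ∨ b.2.2.2 = -1 := by simpa using hb4
  have hcard : (Finset.univ.filter fun j => (A i₁ j, A i₂ j, A i₃ j, A i₄ j) = b).card = d / 16 := by
    rw [← hA.2 i₁ i₂ i₃ i₄ h12 h23 h34 b.1 b.2.1 b.2.2.1 b.2.2.2 hb1' hb2' hb3' hb4']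
    congr 1
    ext j
    simp [Prod.ext_iff, and_assoc]
  have hconst : ∀ j ∈ Finset.univ.filter (fun j => (A i₁ j, A i₂ j, A i₃ j, A i₄ j) = b),
      g (A i₁ j) (A i₂ j) (A i₃ j) (A i₄ j) = g b.1 b.2.1 b.2.2.1 b.2.2.2 := by
    intro j hj
    simp only [Finset.mem_filter, Prod.ext_iff] at hj
    obtain ⟨-, h1, h2, h3, h4⟩ := hj
    rw [h1, h2, h3, h4]
  rw [Finset.sum_congr rfl hconst, Finset.sum_const, hcard, nsmul_eq_mul]

lemma zero_pair (hA : IsFourWiseIndependent A) (hk : 4 ≤ k) {a b : Fin k} (hab : a ≠ b) :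
    ∑ j, A a j * A b j = 0 := by
  classical
  obtain ⟨t, hsub, -, hcard⟩ := Finset.exists_subsuperset_card_eq (n := 4)
    (Finset.subset_univ ({a, b} : Finset (Fin k)))
    (le_trans (Finset.card_insert_le _ _) (by simp))
    (by simpa using hk)
  set m := t.orderEmbOfFin hcard with hm
  have hmem : ∀ x ∈ t, ∃ p : Fin 4, m p = x := by
    intro x hx
    have : x ∈ Set.range m := by
      rw [Finset.range_orderEmbOfFin]; exact hx
    exact this
  obtain ⟨p, hp⟩ := hmem a (hsub (by simp))
  obtain ⟨q, hq⟩ := hmem b (hsub (by simp))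
  have hpq : p ≠ q := by
    rintro rfl; exact hab (hp ▸ hq ▸ rfl)
  have h01 : m 0 < m 1 := m.strictMono (by decide)
  have h12 : m 1 < m 2 := m.strictMono (by decide)
  have h23 : m 2 < m 3 := m.strictMono (by decide)
  rw [← hp, ← hq]
  fin_cases p <;> fin_cases q <;> first
    | exact absurd rfl hpq
    | exact (sum_pattern A hA h01 h12 h23 (fun x1 x2 x3 x4 => x1 * x2)).trans
        (by norm_num [Finset.sum_product])
    | exact (sum_pattern A hA h01 h12 h23 (fun x1 x2 x3 x4 => x1 * x3)).trans
        (by norm_num [Finset.sum_product])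
    | exact (sum_pattern A hA h01 h12 h23 (fun x1 x2 x3 x4 => x1 * x4)).trans
        (by norm_num [Finset.sum_product])
    | exact (sum_pattern A hA h01 h12 h23 (fun x1 x2 x3 x4 => x2 * x1)).trans
        (by norm_num [Finset.sum_product])
    | exact (sum_pattern A hA h01 h12 h23 (fun x1 x2 x3 x4 => x2 * x3)).trans
        (by norm_num [Finset.sum_product])
    | exact (sum_pattern A hA h01 h12 h23 (fun x1 x2 x3 x4 => x2 * x4)).trans
        (by norm_num [Finset.sum_product])
    | exact (sum_pattern A hA h01 h12 h23 (fun x1 x2 x3 x4 => x3 * x1)).trans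
        (by norm_num [Finset.sum_product])
    | exact (sum_pattern A hA h01 h12 h23 (fun x1 x2 x3 x4 => x3 * x2)).trans
        (by norm_num [Finset.sum_product])
    | exact (sum_pattern A hA h01 h12 h23 (fun x1 x2 x3 x4 => x3 * x4)).trans
        (by norm_num [Finset.sum_product])
    | exact (sum_pattern A hA h01 h12 h23 (fun x1 x2 x3 x4 => x4 * x1)).trans
        (by norm_num [Finset.sum_product])
    | exact (sum_pattern A hA h01 h12 h23 (fun x1 x2 x3 x4 => x4 * x2)).trans
        (by norm_num [Finset.sum_product])
    | exact (sum_pattern A hA h01 h12 h23 (fun x1 x2 x3 x4 => x4 * x3)).trans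
        (by norm_num [Finset.sum_product])

lemma zero_quad (hA : IsFourWiseIndependent A) {a b c e : Fin k}
    (hab : a ≠ b) (hac : a ≠ c) (hae : a ≠ e) (hbc : b ≠ c) (hbe : b ≠ e) (hce : c ≠ e) :
    ∑ j, A a j * A b j * A c j * A e j = 0 := by
  classical
  have hcard : ({a, b, c, e} : Finset (Fin k)).card = 4 := by
    rw [Finset.card_insert_of_notMem (by simp [hab, hac, hae]),
      Finset.card_insert_of_notMem (by simp [hbc, hbe]),
      Finset.card_insert_of_notMem (by simp [hce]), Finset.card_singleton]
  set m := ({a, b, c, e} : Finset (Fin k)).orderEmbOfFin hcard with hm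
  have h01 : m 0 < m 1 := m.strictMono (by decide)
  have h12 : m 1 < m 2 := m.strictMono (by decide)
  have h23 : m 2 < m 3 := m.strictMono (by decide)
  have himg : Finset.image m Finset.univ = ({a, b, c, e} : Finset (Fin k)) := by
    apply Finset.coe_injective
    rw [Finset.coe_image, Finset.coe_univ, Set.image_univ]
    exact Finset.range_orderEmbOfFin _ hcard
  have hstep : ∀ j, A a j * A b j * A c j * A e j
      = A (m 0) j * A (m 1) j * A (m 2) j * A (m 3) j := by
    intro j
    have h1 : A a j * A b j * A c j * A e j = ∏ x ∈ ({a, b, c, e} : Finset (Fin k)), A x j := by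
      rw [Finset.prod_insert (by simp [hab, hac, hae]),
        Finset.prod_insert (by simp [hbc, hbe]),
        Finset.prod_insert (by simp [hce]), Finset.prod_singleton]
      ring
    rw [h1, ← himg, Finset.prod_image (fun x _ y _ h => m.injective h), Fin.prod_univ_four]
  rw [Finset.sum_congr rfl fun j _ => hstep j]
  exact (sum_pattern A hA h01 h12 h23 (fun x1 x2 x3 x4 => x1 * x2 * x3 * x4)).trans
    (by norm_num [Finset.sum_product])

lemma sq_one (hA : IsFourWiseIndependent A) (i : Fin k) (j : Fin d) :
    A i j * A i j = 1 := by
  rcases hA.1 i j with h | h <;> rw [h] <;> norm_num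

lemma Tval (hA : IsFourWiseIndependent A) (hk : 4 ≤ k) (a b c e : Fin k) :
    ∑ j, A a j * A b j * A c j * A e j
      = (d : ℝ) * ((if a = b then 1 else 0) * (if c = e then 1 else 0)
          + (if a = c then 1 else 0) * (if b = e then 1 else 0)
          + (if a = e then 1 else 0) * (if b = c then 1 else 0)
          - 2 * ((if a = b then 1 else 0) * (if a = c then 1 else 0)
              * (if a = e then 1 else 0))) := by
  classical
  by_cases hab : a = b
  · subst hab
    by_cases hac : a = c
    · subst hac
      by_cases hae : a = e
      · subst hae
        rw [Finset.sum_congr rfl fun j _ => show A a j * A a j * A a j * A a j = 1 from by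
          linear_combination (A a j * A a j) * sq_one A hA a j + sq_one A hA a j]
        simp [Finset.card_univ]
        ring
      · rw [Finset.sum_congr rfl fun j _ => show A a j * A a j * A a j * A e j
            = A a j * A e j from by
          linear_combination (A a j * A e j) * sq_one A hA a j]
        rw [zero_pair A hA hk hae]
        simp [hae]
    · by_cases hce : c = e
      · subst hce
        rw [Finset.sum_congr rfl fun j _ => show A a j * A a j * A c j * A c j = 1 from by
          linear_combination (A c j * A c j) * sq_one A hA a j + sq_one A hA c j]
        simp [Finset.card_univ, hac]
      · by_cases hae : a = e
        · subst hae
          rw [Finset.sum_congr rfl fun j _ => show A a j * A a j * A c j * A a j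
              = A a j * A c j from by
            linear_combination (A a j * A c j) * sq_one A hA a j]
          rw [zero_pair A hA hk hac]
          simp [hac, Ne.symm hac]
        · rw [Finset.sum_congr rfl fun j _ => show A a j * A a j * A c j * A e j
              = A c j * A e j from by
            linear_combination (A c j * A e j) * sq_one A hA a j]
          rw [zero_pair A hA hk hce]
          simp [hac, hae, hce]
  · by_cases hac : a = c
    · subst hac
      by_cases hbe : b = e
      · subst hbe
        rw [Finset.sum_congr rfl fun j _ => show A a j * A b j * A a j * A b j = 1 from by
          linear_combination (A b j * A b j) * sq_one A hA a j + sq_one A hA b j]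
        simp [Finset.card_univ, hab, Ne.symm hab]
      · rw [Finset.sum_congr rfl fun j _ => show A a j * A b j * A a j * A e j
            = A b j * A e j from by
          linear_combination (A b j * A e j) * sq_one A hA a j]
        rw [zero_pair A hA hk hbe]
        simp [hab, Ne.symm hab, hbe]
    · by_cases hae : a = e
      · subst hae
        by_cases hbc : b = c
        · subst hbc
          rw [Finset.sum_congr rfl fun j _ => show A a j * A b j * A b j * A a j = 1 from by
            linear_combination (A b j * A b j) * sq_one A hA a j + sq_one A hA b j]
          simp [Finset.card_univ, hab, Ne.symm hab]
        · rw [Finset.sum_congr rfl fun j _ => show A a j * A b j * A c j * A a j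
              = A b j * A c j from by
            linear_combination (A b j * A c j) * sq_one A hA a j]
          rw [zero_pair A hA hk hbc]
          simp [hab, hac, hbc]
      · by_cases hbc : b = c
        · subst hbc
          rw [Finset.sum_congr rfl fun j _ => show A a j * A b j * A b j * A e j
              = A a j * A e j from by
            linear_combination (A a j * A e j) * sq_one A hA b j]
          rw [zero_pair A hA hk hae]
          simp [hab, hae]
        · by_cases hbe : b = e
          · subst hbe
            rw [Finset.sum_congr rfl fun j _ => show A a j * A b j * A c j * A b j
                = A a j * A c j from by
              linear_combination (A a j * A c j) * sq_one A hA b j]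
            rw [zero_pair A hA hk hac]
            simp [hab, hac, hbc]
          · by_cases hce : c = e
            · subst hce
              rw [Finset.sum_congr rfl fun j _ => show A a j * A b j * A c j * A c j
                  = A a j * A b j from by
                linear_combination (A a j * A b j) * sq_one A hA c j]
              rw [zero_pair A hA hk hab]
              simp [hab, hac, hbc]
            · rw [zero_quad A hA hab hac hae hbc hbe hce]
              simp [hab, hac, hae, hbc, hbe, hce]

end FourWiseAux

/-- A 4-wise independent signed matrix satisfies `‖Aᵀ‖_{2→4} ≤ (3d)^{1/4}`. -/
theorem opNorm_transpose_fourwise_le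
    {k d : ℕ} (A : Matrix (Fin k) (Fin d) ℝ)
    (hA : IsFourWiseIndependent A) (hd : 16 ∣ d) (hk : 4 ≤ k) :
    opNorm 2 4 A.transpose ≤ (3 * (d : ℝ)) ^ ((1 : ℝ) / 4) := by
  classical
  have hd3 : (0:ℝ) ≤ (3 * (d : ℝ)) ^ ((1:ℝ)/4) := Real.rpow_nonneg (by positivity) _
  apply Real.sSup_le _ hd3
  rintro x ⟨u, hu, rfl⟩
  have hu2 : ∑ i, u i ^ 2 = 1 := by
    have h1 : (∑ i, |u i| ^ (2:ℝ)) ^ ((1:ℝ)/2) = 1 := hu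
    have h2 : ∑ i, |u i| ^ (2:ℝ) = ∑ i, u i ^ 2 :=
      Finset.sum_congr rfl fun i _ => by
        rw [show ((2:ℝ)) = ((2:ℕ):ℝ) by norm_num, Real.rpow_natCast, sq_abs]
    have h3 : (0:ℝ) ≤ ∑ i, u i ^ 2 := by positivity
    rw [h2] at h1
    have h4 : ((∑ i, u i ^ 2) ^ ((1:ℝ)/2)) ^ (2:ℝ) = 1 ^ (2:ℝ) := by rw [h1]
    rw [← Real.rpow_mul h3] at h4
    norm_num at h4
    exact h4
  show (∑ j, |(A.transpose.mulVec u) j| ^ (4:ℝ)) ^ ((1:ℝ)/4) ≤ (3 * (d : ℝ)) ^ ((1:ℝ)/4)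
  set y : Fin d → ℝ := A.transpose.mulVec u with hy
  have habs : ∀ j, |y j| ^ (4:ℝ) = y j ^ (4:ℕ) := fun j => by
    rw [show ((4:ℝ)) = ((4:ℕ):ℝ) by norm_num, Real.rpow_natCast, ← abs_pow,
      abs_of_nonneg (by positivity)]
  rw [Finset.sum_congr rfl fun j _ => habs j]
  have hyj : ∀ j, y j = ∑ i, u i * A i j := by
    intro j
    simp [hy, Matrix.mulVec, dotProduct, Matrix.transpose_apply, mul_comm]
  have key : ∑ j, y j ^ 4 ≤ 3 * (d : ℝ) := by
    have step1 : ∑ j, y j ^ 4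
        = ∑ j, ∑ i1, ∑ i2, ∑ i3, ∑ i4,
            (u i1 * A i1 j) * (u i2 * A i2 j) * (u i3 * A i3 j) * (u i4 * A i4 j) :=
      Finset.sum_congr rfl fun j _ => by rw [hyj j, sum_pow_four]
    have step2 : ∑ j, ∑ i1, ∑ i2, ∑ i3, ∑ i4,
            (u i1 * A i1 j) * (u i2 * A i2 j) * (u i3 * A i3 j) * (u i4 * A i4 j)
        = ∑ i1, ∑ i2, ∑ i3, ∑ i4, ∑ j,
            (u i1 * A i1 j) * (u i2 * A i2 j) * (u i3 * A i3 j) * (u i4 * A i4 j) := by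
      rw [Finset.sum_comm]
      refine Finset.sum_congr rfl fun i1 _ => ?_
      rw [Finset.sum_comm]
      refine Finset.sum_congr rfl fun i2 _ => ?_
      rw [Finset.sum_comm]
      refine Finset.sum_congr rfl fun i3 _ => ?_
      exact Finset.sum_comm
    have step3 : ∑ i1, ∑ i2, ∑ i3, ∑ i4, ∑ j,
            (u i1 * A i1 j) * (u i2 * A i2 j) * (u i3 * A i3 j) * (u i4 * A i4 j)
        = ∑ i1, ∑ i2, ∑ i3, ∑ i4, (u i1 * u i2 * u i3 * u i4) *
            (d : ℝ) * ((if i1 = i2 then (1:ℝ) else 0) * (if i3 = i4 then 1 else 0)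
              + (if i1 = i3 then 1 else 0) * (if i2 = i4 then 1 else 0)
              + (if i1 = i4 then 1 else 0) * (if i2 = i3 then 1 else 0)
              - 2 * ((if i1 = i2 then 1 else 0) * (if i1 = i3 then 1 else 0)
                  * (if i1 = i4 then 1 else 0))) := by
      refine Finset.sum_congr rfl fun i1 _ => Finset.sum_congr rfl fun i2 _ =>
        Finset.sum_congr rfl fun i3 _ => Finset.sum_congr rfl fun i4 _ => ?_
      have hpull : ∑ j, (u i1 * A i1 j) * (u i2 * A i2 j) * (u i3 * A i3 j) * (u i4 * A i4 j)
          = (u i1 * u i2 * u i3 * u i4) * ∑ j, A i1 j * A i2 j * A i3 j * A i4 j := by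
        rw [Finset.mul_sum]
        exact Finset.sum_congr rfl fun j _ => by ring
      rw [hpull, Tval A hA hk i1 i2 i3 i4]
      ring
    have step4 : ∑ i1, ∑ i2, ∑ i3, ∑ i4, (u i1 * u i2 * u i3 * u i4) *
            (d : ℝ) * ((if i1 = i2 then (1:ℝ) else 0) * (if i3 = i4 then 1 else 0)
              + (if i1 = i3 then 1 else 0) * (if i2 = i4 then 1 else 0)
              + (if i1 = i4 then 1 else 0) * (if i2 = i3 then 1 else 0)
              - 2 * ((if i1 = i2 then 1 else 0) * (if i1 = i3 then 1 else 0)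
                  * (if i1 = i4 then 1 else 0)))
        = (d : ℝ) * (3 * ((∑ i, u i ^ 2) * (∑ i, u i ^ 2)) - 2 * ∑ i, u i ^ 4) := by
      rw [← quad_sum_eq u (d : ℝ)]
      exact Finset.sum_congr rfl fun i1 _ => Finset.sum_congr rfl fun i2 _ =>
        Finset.sum_congr rfl fun i3 _ => Finset.sum_congr rfl fun i4 _ => by ring
    rw [step1, step2, step3, step4, hu2]
    have h4 : (0:ℝ) ≤ ∑ i, u i ^ 4 := by positivity
    have hd0 : (0:ℝ) ≤ (d : ℝ) := Nat.cast_nonneg d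
    nlinarith
  calc (∑ j, y j ^ 4) ^ ((1:ℝ)/4) ≤ (3 * (d:ℝ)) ^ ((1:ℝ)/4) :=
    Real.rpow_le_rpow (by positivity) key (by norm_num)
end

section
/- Let ε ∈ (0, 1/√128], let s be a positive integer with s ≤ 1/(128 ε²), let d > s, let S ⊆ {1,…,d} with |S| = s, and set y_S = s^{−1/2} Σ_{j∈S} e_j ∈ ℝ^d. Let ‖·‖ be any norm on ℝ^k, and let f be a map from {e₁,…,e_d, y_S} to ℝ^k satisfying (1−ε)‖u−v‖₂ ≤ ‖f(u)−f(v)‖ ≤ (1+ε)‖u−v‖₂ for all u, v in this set. Let z₁,…,z_d, z_S ∈ ℝ^k satisfy ‖z_j − f(e_j)‖ ≤ ε for each j and ‖z_S − f(y_S)‖ ≤ ε. Then there exists τ ∈ ℝ such that for every j ∈ {1,…,d}: j ∈ S if and only if ‖z_j − z_S‖ ≤ τ. -/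
open MeasureTheory ProbabilityTheory Real Finset

lemma lp2 {n : ℕ} (x : Fin n → ℝ) : lpNorm 2 x = Real.sqrt (∑ i, (x i)^2) := by
  unfold _root_.lpNorm
  rw [Real.sqrt_eq_rpow]
  congr 1
  refine Finset.sum_congr rfl fun i _ => ?_
  rw [show ((2:ℝ) = ((2:ℕ):ℝ)) by norm_num, Real.rpow_natCast, sq_abs]

/-- The distances between cover representatives determine membership in `S`
via a threshold. -/
theorem threshold_recovers_membership
    {d k : ℕ} (ε : ℝ) (hε0 : 0 < ε) (hε : ε ≤ 1 / Real.sqrt 128)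
    (s : ℕ) (hs : 0 < s) (hsε : (s : ℝ) ≤ 1 / (128 * ε ^ 2)) (hsd : s < d)
    (S : Finset (Fin d)) (hS : S.card = s)
    (yS : Fin d → ℝ)
    (hyS : yS = fun j => (Real.sqrt s)⁻¹ * (if j ∈ S then 1 else 0))
    (N : (Fin k → ℝ) → ℝ)
    (hN0 : ∀ z, N z = 0 ↔ z = 0)
    (hNsmul : ∀ (a : ℝ) z, N (a • z) = |a| * N z)
    (hNadd : ∀ z w, N (z + w) ≤ N z + N w)
    (f : (Fin d → ℝ) → (Fin k → ℝ))
    (hf : ∀ u ∈ insert yS (Set.range fun j : Fin d => (Pi.single j 1 : Fin d → ℝ)),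
          ∀ v ∈ insert yS (Set.range fun j : Fin d => (Pi.single j 1 : Fin d → ℝ)),
        (1 - ε) * lpNorm 2 (u - v) ≤ N (f u - f v) ∧
          N (f u - f v) ≤ (1 + ε) * lpNorm 2 (u - v))
    (z : Fin d → (Fin k → ℝ)) (zS : Fin k → ℝ)
    (hz : ∀ j, N (z j - f (Pi.single j 1)) ≤ ε)
    (hzS : N (zS - f yS) ≤ ε) :
    ∃ τ : ℝ, ∀ j : Fin d, j ∈ S ↔ N (z j - zS) ≤ τ := by

  have hsr : (0:ℝ) < s := by exact_mod_cast hs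
  have hsq : (0:ℝ) < Real.sqrt s := Real.sqrt_pos.2 hsr
  set a : ℝ := (Real.sqrt s)⁻¹ with ha
  have ha0 : 0 < a := inv_pos.2 hsq
  have haa : a * Real.sqrt s = 1 := inv_mul_cancel₀ hsq.ne'
  have hs2 : Real.sqrt s ^ 2 = s := Real.sq_sqrt hsr.le
  have ha2 : (s:ℝ) * a ^ 2 = 1 := by
    rw [ha, inv_pow, ← hs2]; field_simp; rw [Real.sqrt_sq hsq.le]
  have hs1 : (1:ℝ) ≤ Real.sqrt s := by
    rw [show (1:ℝ) = Real.sqrt 1 by simp]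
    exact Real.sqrt_le_sqrt (by exact_mod_cast hs)
  have ha1 : a ≤ 1 := by rw [ha]; exact inv_le_one_of_one_le₀ hs1
  set r2 : ℝ := Real.sqrt 2 with hr2def
  have hr2 : r2 ^ 2 = 2 := Real.sq_sqrt (by norm_num)
  have hr2pos : 0 < r2 := Real.sqrt_pos.2 (by norm_num)
  have hr2lt : r2 < 2 := by nlinarith
  have h128 : Real.sqrt 128 = 8 * r2 := by
    rw [show (128:ℝ) = 8^2 * 2 by norm_num, Real.sqrt_mul (by positivity), Real.sqrt_sq (by norm_num)]
  have hεs : 8 * r2 * ε ≤ 1 := by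
    rw [h128] at hε
    have := (le_div_iff₀ (by positivity : (0:ℝ) < 8 * r2)).mp hε
    linarith
  -- a ≥ 8 √2 ε
  have haε : 8 * r2 * ε ≤ a := by
    have h1 : (8 * r2 * ε * Real.sqrt s) ^ 2 ≤ 1 := by
      have hb : (s:ℝ) * (128 * ε ^ 2) ≤ 1 := by
        rw [← le_div_iff₀ (by positivity)]; exact hsε
      have hx : (8 * r2 * ε * Real.sqrt s) ^ 2 = (s:ℝ) * (128 * ε ^ 2) := by
        rw [show (8 * r2 * ε * Real.sqrt s) ^ 2
            = 64 * r2 ^ 2 * ε ^ 2 * Real.sqrt s ^ 2 by ring, hr2, hs2]; ring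
      rw [hx]; exact hb
    have h2 : 8 * r2 * ε * Real.sqrt s ≤ 1 := by
      nlinarith [sq_nonneg (8 * r2 * ε * Real.sqrt s - 1)]
    nlinarith [mul_pos (mul_pos (by norm_num : (0:ℝ) < 8) hr2pos) hε0]
  -- the two exact distances
  have hsum : ∀ j : Fin d, (∑ i, ((Pi.single j 1 : Fin d → ℝ) i - yS i)^2)
      = (if j ∈ S then 2 - 2*a else 2) := by
    intro j
    have h1 : (∑ i, ((Pi.single j 1 : Fin d → ℝ) i)^2) = 1 := by
      simp [Pi.single_apply, sq, ite_mul, Finset.sum_ite_eq']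
    have h2 : (∑ i, (Pi.single j 1 : Fin d → ℝ) i * yS i) = yS j := by
      simp [Pi.single_apply, ite_mul, Finset.sum_ite_eq']
    have h3 : (∑ i, (yS i)^2) = 1 := by
      rw [hyS]
      have : ∀ i : Fin d, (((Real.sqrt s)⁻¹ * (if i ∈ S then (1:ℝ) else 0)))^2
          = if i ∈ S then a^2 else 0 := by
        intro i; by_cases hi : i ∈ S <;> simp [hi, ha, mul_pow]
      rw [Finset.sum_congr rfl fun i _ => this i, Finset.sum_ite_mem,
        Finset.univ_inter, Finset.sum_const, hS, nsmul_eq_mul]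
      exact ha2
    have expand : ∀ i, ((Pi.single j 1 : Fin d → ℝ) i - yS i)^2
        = ((Pi.single j 1 : Fin d → ℝ) i)^2 - 2 * ((Pi.single j 1 : Fin d → ℝ) i * yS i) + (yS i)^2 := by
      intro i; ring
    rw [Finset.sum_congr rfl fun i _ => expand i]
    rw [Finset.sum_add_distrib, Finset.sum_sub_distrib, ← Finset.mul_sum, h1, h2, h3]
    rw [hyS]
    by_cases hj : j ∈ S <;> simp [hj] <;> ring
  have hlp : ∀ j : Fin d, lpNorm 2 ((Pi.single j 1 : Fin d → ℝ) - yS)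
      = Real.sqrt (if j ∈ S then 2 - 2*a else 2) := by
    intro j
    rw [lp2]
    congr 1
    rw [← hsum j]
    exact Finset.sum_congr rfl fun i _ => by simp
  -- membership facts
  have hyS' : yS ∈ insert yS (Set.range fun j : Fin d => (Pi.single j 1 : Fin d → ℝ)) :=
    Set.mem_insert _ _
  have hej : ∀ j : Fin d, (Pi.single j 1 : Fin d → ℝ) ∈
      insert yS (Set.range fun j : Fin d => (Pi.single j 1 : Fin d → ℝ)) :=
    fun j => Set.mem_insert_iff.2 (Or.inr ⟨j, rfl⟩)
  have hNsymm : ∀ w : Fin k → ℝ, N (-w) = N w := by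
    intro w
    have := hNsmul (-1) w
    simpa using this
  -- triangle bounds
  have hupper : ∀ j : Fin d, N (z j - zS) ≤ N (f (Pi.single j 1) - f yS) + 2 * ε := by
    intro j
    have e1 : z j - zS = (z j - f (Pi.single j 1)) + ((f (Pi.single j 1) - f yS) + (f yS - zS)) := by
      abel
    calc N (z j - zS) ≤ N (z j - f (Pi.single j 1)) + N ((f (Pi.single j 1) - f yS) + (f yS - zS)) := by
          rw [e1]; exact hNadd _ _
      _ ≤ N (z j - f (Pi.single j 1)) + (N (f (Pi.single j 1) - f yS) + N (f yS - zS)) := by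
          linarith [hNadd (f (Pi.single j 1) - f yS) (f yS - zS)]
      _ ≤ ε + (N (f (Pi.single j 1) - f yS) + ε) := by
          have h4 : N (f yS - zS) ≤ ε := by
            rw [show f yS - zS = -(zS - f yS) by abel, hNsymm]; exact hzS
          linarith [hz j]
      _ = N (f (Pi.single j 1) - f yS) + 2 * ε := by ring
  have hlower : ∀ j : Fin d, N (f (Pi.single j 1) - f yS) ≤ N (z j - zS) + 2 * ε := by
    intro j
    have e1 : f (Pi.single j 1) - f yS = (f (Pi.single j 1) - z j) + ((z j - zS) + (zS - f yS)) := by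
      abel
    have h5 : N (f (Pi.single j 1) - z j) ≤ ε := by
      rw [show f (Pi.single j 1) - z j = -(z j - f (Pi.single j 1)) by abel, hNsymm]; exact hz j
    calc N (f (Pi.single j 1) - f yS) ≤ N (f (Pi.single j 1) - z j) + N ((z j - zS) + (zS - f yS)) := by
          rw [e1]; exact hNadd _ _
      _ ≤ N (f (Pi.single j 1) - z j) + (N (z j - zS) + N (zS - f yS)) := by
          linarith [hNadd (z j - zS) (zS - f yS)]
      _ ≤ ε + (N (z j - zS) + ε) := by linarith [hzS]
      _ = N (z j - zS) + 2 * ε := by ring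
  -- numeric separation
  have hnn : 0 ≤ 2 - 2 * a := by linarith
  have hre : 0 < r2 * ε := mul_pos hr2pos hε0
  have hsqbound : Real.sqrt (2 - 2*a) ≤ r2 * (1 - 4 * r2 * ε) := by
    have hre2 : 0 ≤ 1 - 4 * r2 * ε := by linarith
    have hpos : 0 ≤ r2 * (1 - 4 * r2 * ε) := mul_nonneg hr2pos.le hre2
    have hex : (r2 * (1 - 4 * r2 * ε))^2 = 2 - 16*(r2*ε) + 64*ε^2 := by
      have h' : (r2 * (1 - 4 * r2 * ε))^2 = r2^2 - 8*r2^2*(r2*ε) + 16*(r2^2)^2*ε^2 := by ring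
      rw [h', hr2]; ring
    have hsq2 : 2 - 2*a ≤ (r2 * (1 - 4 * r2 * ε))^2 := by
      rw [hex]; nlinarith [haε, sq_nonneg ε]
    calc Real.sqrt (2 - 2*a) ≤ Real.sqrt ((r2 * (1 - 4 * r2 * ε))^2) := Real.sqrt_le_sqrt hsq2
      _ = r2 * (1 - 4 * r2 * ε) := Real.sqrt_sq hpos
  have hgap : (1 + ε) * Real.sqrt (2 - 2*a) + 2*ε < (1 - ε) * r2 - 2*ε := by
    have h6 : (1 + ε) * Real.sqrt (2 - 2*a) ≤ (1 + ε) * (r2 * (1 - 4 * r2 * ε)) :=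
      mul_le_mul_of_nonneg_left hsqbound (by linarith)
    have hx : (1+ε)*(r2*(1-4*r2*ε)) = r2 + r2*ε - 8*ε - 8*ε^2 := by
      have h' : (1+ε)*(r2*(1-4*r2*ε)) = r2 + r2*ε - 4*r2^2*ε - 4*r2^2*ε^2 := by ring
      rw [h', hr2]; ring
    rw [hx] at h6
    have h7 : ε * r2 < ε * 2 := mul_lt_mul_of_pos_left hr2lt hε0
    linarith [h6, h7, sq_nonneg ε]
  -- conclude
  refine ⟨(1 + ε) * Real.sqrt (2 - 2*a) + 2*ε, fun j => ?_⟩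
  constructor
  · intro hj
    have hD := (hf _ (hej j) _ hyS').2
    rw [hlp j, if_pos hj] at hD
    linarith [hupper j]
  · intro hle
    by_contra hj
    have hD := (hf _ (hej j) _ hyS').1
    rw [hlp j, if_neg hj] at hD
    have := hlower j
    rw [← hr2def] at hD
    linarith
end

section
/- Let ε ∈ (0, 1/√128], let s be a positive integer with s ≤ 1/(128 ε²), and let d > s. For each index m ∈ {1,…,d}, let S_m, S′_m ⊆ {1,…,d} with |S_m| = |S′_m| = s, and define y_{S_m} = s^{−1/2} Σ_{j∈S_m} e_j and similarly y_{S′_m}. Let ‖·‖ be a norm on ℝ^k, and let f, f′ be maps from {e₁,…,e_d, y_{S₁},…,y_{S_d}} and {e₁,…,e_d, y_{S′₁},…,y_{S′_d}} respectively into ℝ^k, each satisfying the distortion bounds (1−ε)‖u−v‖₂ ≤ ‖f(u)−f(v)‖ ≤ (1+ε)‖u−v‖₂ (resp. for f′) for all pairs u, v in its domain. Suppose z₁,…,z_d, z_{S₁},…,z_{S_d} ∈ ℝ^k satisfy ‖z_j − f(e_j)‖ ≤ ε and ‖z_{S_m} − f(y_{S_m})‖ ≤ ε, suppose z′₁,…,z′_d,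 z′_{S′₁},…,z′_{S′_d} satisfy the analogous bounds for f′, and suppose z_j = z′_j for all j and z_{S_m} = z′_{S′_m} for all m. Then S_m = S′_m for every m ∈ {1,…,d}. -/
open MeasureTheory ProbabilityTheory Real Finset

lemma lpNorm_two_sqrt {n : ℕ} (x : Fin n → ℝ) :
    lpNorm 2 x = Real.sqrt (∑ i, (x i) ^ 2) := by
  unfold _root_.lpNorm
  rw [Real.sqrt_eq_rpow]
  congr 1
  refine Finset.sum_congr rfl fun i _ => ?_
  rw [show (2 : ℝ) = ((2 : ℕ) : ℝ) by norm_num, Real.rpow_natCast, sq_abs]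

set_option maxHeartbeats 1000000 in
/-- The encoding by cover representatives is injective: equal representatives
force equal subsets. -/
theorem encoding_injective
    {d k : ℕ} (ε : ℝ) (hε0 : 0 < ε) (hε : ε ≤ 1 / Real.sqrt 128)
    (s : ℕ) (hs : 0 < s) (hsε : (s : ℝ) ≤ 1 / (128 * ε ^ 2)) (hsd : s < d)
    (S S' : Fin d → Finset (Fin d))
    (hS : ∀ m, (S m).card = s) (hS' : ∀ m, (S' m).card = s)
    (y y' : Fin d → (Fin d → ℝ))
    (hy : ∀ m, y m = fun j => (Real.sqrt s)⁻¹ * (if j ∈ S m then 1 else 0))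
    (hy' : ∀ m, y' m = fun j => (Real.sqrt s)⁻¹ * (if j ∈ S' m then 1 else 0))
    (N : (Fin k → ℝ) → ℝ)
    (hN0 : ∀ z, N z = 0 ↔ z = 0)
    (hNsmul : ∀ (a : ℝ) z, N (a • z) = |a| * N z)
    (hNadd : ∀ z w, N (z + w) ≤ N z + N w)
    (f f' : (Fin d → ℝ) → (Fin k → ℝ))
    (hf : ∀ u ∈ (Set.range fun j : Fin d => (Pi.single j 1 : Fin d → ℝ)) ∪ Set.range y,
          ∀ v ∈ (Set.range fun j : Fin d => (Pi.single j 1 : Fin d → ℝ)) ∪ Set.range y,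
        (1 - ε) * lpNorm 2 (u - v) ≤ N (f u - f v) ∧
          N (f u - f v) ≤ (1 + ε) * lpNorm 2 (u - v))
    (hf' : ∀ u ∈ (Set.range fun j : Fin d => (Pi.single j 1 : Fin d → ℝ)) ∪ Set.range y',
           ∀ v ∈ (Set.range fun j : Fin d => (Pi.single j 1 : Fin d → ℝ)) ∪ Set.range y',
        (1 - ε) * lpNorm 2 (u - v) ≤ N (f' u - f' v) ∧
          N (f' u - f' v) ≤ (1 + ε) * lpNorm 2 (u - v))
    (z z' : Fin d → (Fin k → ℝ)) (zS zS' : Fin d → (Fin k → ℝ))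
    (hz : ∀ j, N (z j - f (Pi.single j 1)) ≤ ε)
    (hzS : ∀ m, N (zS m - f (y m)) ≤ ε)
    (hz' : ∀ j, N (z' j - f' (Pi.single j 1)) ≤ ε)
    (hzS' : ∀ m, N (zS' m - f' (y' m)) ≤ ε)
    (heqz : ∀ j, z j = z' j) (heqzS : ∀ m, zS m = zS' m) :
    ∀ m, S m = S' m := by
  -- basic facts about s and t = 1/√s
  have hs0 : (0 : ℝ) < s := by exact_mod_cast hs
  have hs1 : (1 : ℝ) ≤ s := by exact_mod_cast hs
  have hsq : (0 : ℝ) < Real.sqrt s := Real.sqrt_pos.mpr hs0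
  set t : ℝ := (Real.sqrt s)⁻¹ with ht_def
  have ht0 : 0 < t := inv_pos.mpr hsq
  have hsq1 : (1 : ℝ) ≤ Real.sqrt s := by
    rw [show (1:ℝ) = Real.sqrt 1 by simp]
    exact Real.sqrt_le_sqrt hs1
  have ht1 : t ≤ 1 := by
    rw [ht_def]
    exact inv_le_one_of_one_le₀ hsq1
  have ht2 : t ^ 2 = (s : ℝ)⁻¹ := by
    rw [ht_def, inv_pow, Real.sq_sqrt hs0.le]
  have htε : 128 * ε ^ 2 ≤ t ^ 2 := by
    have h2 : (0 : ℝ) < 128 * ε ^ 2 := by positivity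
    have h1 : 128 * ε ^ 2 * (s : ℝ) ≤ 1 := by
      calc 128 * ε ^ 2 * (s : ℝ) ≤ 128 * ε ^ 2 * (1 / (128 * ε ^ 2)) := by
            exact mul_le_mul_of_nonneg_left hsε h2.le
        _ = 1 := by field_simp
    rw [ht2]
    nlinarith [mul_le_mul_of_nonneg_right h1 (inv_nonneg.mpr hs0.le),
      mul_inv_cancel₀ (ne_of_gt hs0)]
  -- norm symmetry
  have hNsub : ∀ a b : Fin k → ℝ, N (a - b) = N (b - a) := by
    intro a b
    have h := hNsmul (-1) (b - a)
    simpa [neg_sub] using h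
  -- key sum computation
  have key : ∀ (T : Finset (Fin d)), T.card = s → ∀ j : Fin d,
      (∑ i, ((Pi.single j (1:ℝ) : Fin d → ℝ) i - t * (if i ∈ T then 1 else 0)) ^ 2)
        = 2 - 2 * t * (if j ∈ T then 1 else 0) := by
    intro T hT j
    have hptw : ∀ i : Fin d,
        ((Pi.single j (1:ℝ) : Fin d → ℝ) i - t * (if i ∈ T then 1 else 0)) ^ 2
          = (if i = j then 1 - 2 * t * (if j ∈ T then 1 else 0) else 0)
              + t ^ 2 * (if i ∈ T then 1 else 0) := by
      intro i
      rcases eq_or_ne i j with rfl | h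
      · simp only [Pi.single_eq_same, if_pos rfl]
        by_cases hi : i ∈ T <;> simp [hi] <;> ring
      · simp only [Pi.single_eq_of_ne h, if_neg h]
        by_cases hi : i ∈ T <;> simp [hi] <;> ring
    rw [Finset.sum_congr rfl (fun i _ => hptw i), Finset.sum_add_distrib,
      Finset.sum_ite_eq' Finset.univ j, if_pos (Finset.mem_univ j), ← Finset.mul_sum]
    have hsum : (∑ i : Fin d, (if i ∈ T then (1:ℝ) else 0)) = T.card := by
      simp
    rw [hsum, hT, ht2]
    have : (s : ℝ)⁻¹ * (s : ℝ) = 1 := inv_mul_cancel₀ (ne_of_gt hs0)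
    rw [this]
    ring
  intro m
  refine Finset.eq_of_subset_of_card_le ?_ (by rw [hS m, hS' m])
  intro j hj
  by_contra hj'
  set u : Fin d → ℝ := Pi.single j 1 with hu_def
  have hu : u ∈ (Set.range fun j : Fin d => (Pi.single j 1 : Fin d → ℝ)) ∪ Set.range y :=
    Or.inl ⟨j, rfl⟩
  have hu' : u ∈ (Set.range fun j : Fin d => (Pi.single j 1 : Fin d → ℝ)) ∪ Set.range y' :=
    Or.inl ⟨j, rfl⟩
  have hym : y m ∈ (Set.range fun j : Fin d => (Pi.single j 1 : Fin d → ℝ)) ∪ Set.range y :=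
    Or.inr ⟨m, rfl⟩
  have hym' : y' m ∈ (Set.range fun j : Fin d => (Pi.single j 1 : Fin d → ℝ)) ∪ Set.range y' :=
    Or.inr ⟨m, rfl⟩
  -- the two Euclidean distances
  have e1 : lpNorm 2 (u - y m) = Real.sqrt (2 - 2 * t) := by
    rw [lpNorm_two_sqrt]
    congr 1
    have hk := key (S m) (hS m) j
    rw [if_pos hj] at hk
    calc (∑ i, ((u - y m) i) ^ 2)
        = ∑ i, ((Pi.single j (1:ℝ) : Fin d → ℝ) i - t * (if i ∈ S m then 1 else 0)) ^ 2 := by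
          refine Finset.sum_congr rfl fun i _ => ?_
          rw [hy m]
          simp [hu_def]
      _ = 2 - 2 * t * 1 := hk
      _ = 2 - 2 * t := by ring
  have e2 : lpNorm 2 (u - y' m) = Real.sqrt 2 := by
    rw [lpNorm_two_sqrt]
    congr 1
    have hk := key (S' m) (hS' m) j
    rw [if_neg hj'] at hk
    calc (∑ i, ((u - y' m) i) ^ 2)
        = ∑ i, ((Pi.single j (1:ℝ) : Fin d → ℝ) i - t * (if i ∈ S' m then 1 else 0)) ^ 2 := by
          refine Finset.sum_congr rfl fun i _ => ?_
          rw [hy' m]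
          simp [hu_def]
      _ = 2 - 2 * t * 0 := hk
      _ = 2 := by ring
  -- upper bound on N (z j - zS m)
  have hup : N (z j - zS m) ≤ (1 + ε) * Real.sqrt (2 - 2 * t) + 2 * ε := by
    have h1 : z j - zS m = (z j - f u) + ((f u - f (y m)) + (f (y m) - zS m)) := by abel
    have h2 := hNadd (z j - f u) ((f u - f (y m)) + (f (y m) - zS m))
    have h3 := hNadd (f u - f (y m)) (f (y m) - zS m)
    have h4 := hz j
    have h5 := (hf u hu (y m) hym).2
    rw [e1] at h5
    have h6 : N (f (y m) - zS m) ≤ ε := by rw [hNsub]; exact hzS m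
    have h7 : N (z j - zS m) = N ((z j - f u) + ((f u - f (y m)) + (f (y m) - zS m))) :=
      congrArg N h1
    rw [← hu_def] at h4
    linarith
  -- lower bound on N (z' j - zS' m)
  have hlo : (1 - ε) * Real.sqrt 2 ≤ N (z' j - zS' m) + 2 * ε := by
    have h1 : f' u - f' (y' m)
        = (f' u - z' j) + ((z' j - zS' m) + (zS' m - f' (y' m))) := by abel
    have h2 := hNadd (f' u - z' j) ((z' j - zS' m) + (zS' m - f' (y' m)))
    have h3 := hNadd (z' j - zS' m) (zS' m - f' (y' m))
    have h4 : N (f' u - z' j) ≤ ε := by rw [hNsub, hu_def]; exact hz' j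
    have h5 := (hf' u hu' (y' m) hym').1
    rw [e2] at h5
    have h6 := hzS' m
    have h7 : N (f' u - f' (y' m))
        = N ((f' u - z' j) + ((z' j - zS' m) + (zS' m - f' (y' m)))) := congrArg N h1
    linarith
  -- combine
  have heq : N (z j - zS m) = N (z' j - zS' m) := by rw [heqz j, heqzS m]
  have hfin : (1 - ε) * Real.sqrt 2 ≤ (1 + ε) * Real.sqrt (2 - 2 * t) + 4 * ε := by
    linarith [heq ▸ hup, hlo]
  -- numeric contradiction
  set a : ℝ := Real.sqrt (2 - 2 * t) with ha_def
  set b : ℝ := Real.sqrt 2 with hb_def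
  have ha0 : 0 ≤ a := Real.sqrt_nonneg _
  have hb0 : 0 < b := Real.sqrt_pos.mpr (by norm_num)
  have ha2 : a ^ 2 = 2 - 2 * t := Real.sq_sqrt (by linarith)
  have hb2 : b ^ 2 = 2 := Real.sq_sqrt (by norm_num)
  have hab : a ≤ b := by
    rw [ha_def, hb_def]
    exact Real.sqrt_le_sqrt (by linarith)
  -- from t² ≥ 128 ε² = 64 b² ε², t > 0: t ≥ 8 b ε
  have htb : 8 * b * ε ≤ t := by
    nlinarith [sq_nonneg (t - 8 * b * ε), mul_pos ht0 (mul_pos hb0 hε0)]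
  -- from hfin: (b - a) ≤ ε (a + b) + 4 ε, multiply by (a + b) ≥ b
  nlinarith [mul_le_mul_of_nonneg_right hfin (by linarith : (0:ℝ) ≤ a + b),
    mul_pos hb0 hε0, mul_nonneg hε0.le ha0, sq_nonneg (b - a),
    mul_le_mul_of_nonneg_left htb (by linarith : (0:ℝ) ≤ b)]
end

section
/- Let H ∈ ℝ^{d×d} be a matrix all of whose entries have absolute value d^{−1/2} (in particular, the Walsh–Hadamard matrix), let x ∈ ℝ^d with ‖x‖₂ = 1, and let ξ be a uniform random sign vector in {−1,+1}^d with D = diag(ξ). Then E ‖H D x‖₄ ≤ 3^{1/4} · d^{−1/4}. -/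
open MeasureTheory ProbabilityTheory Real Finset

section Aux
set_option linter.unusedSectionVars false
variable {Ω : Type} [MeasureSpace Ω] [IsProbabilityMeasure (ℙ : Measure Ω)]
variable {d : ℕ} {ξ : Ω → Fin d → ℝ}

lemma rad_abs (hξ : IsRademacherVector ξ) (ω : Ω) (j : Fin d) : |ξ ω j| = 1 := by
  rcases hξ.2.2.1 ω j with h | h <;> rw [h] <;> norm_num

lemma rad_sq (hξ : IsRademacherVector ξ) (ω : Ω) (j : Fin d) : ξ ω j * ξ ω j = 1 := by
  rcases hξ.2.2.1 ω j with h | h <;> rw [h] <;> norm_num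

lemma rad_int (hξ : IsRademacherVector ξ) (j : Fin d) :
    Integrable (fun ω => ξ ω j) ℙ := by
  refine (integrable_const (1:ℝ)).mono' (hξ.1 j).aestronglyMeasurable ?_
  exact Filter.Eventually.of_forall fun ω => by
    rw [Real.norm_eq_abs, rad_abs hξ]

lemma rad_int_mul (hξ : IsRademacherVector ξ) (j k : Fin d) :
    Integrable (fun ω => ξ ω j * ξ ω k) ℙ := by
  refine (integrable_const (1:ℝ)).mono' (((hξ.1 j).mul (hξ.1 k))).aestronglyMeasurable ?_
  exact Filter.Eventually.of_forall fun ω => by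
    rw [Real.norm_eq_abs, abs_mul, rad_abs hξ, rad_abs hξ, mul_one]

lemma rad_int4 (hξ : IsRademacherVector ξ) (j k l m : Fin d) :
    Integrable (fun ω => ξ ω j * ξ ω k * ξ ω l * ξ ω m) ℙ := by
  refine (integrable_const (1:ℝ)).mono'
    ((((hξ.1 j).mul (hξ.1 k)).mul (hξ.1 l)).mul (hξ.1 m)).aestronglyMeasurable ?_
  exact Filter.Eventually.of_forall fun ω => by
    rw [Real.norm_eq_abs, abs_mul, abs_mul, abs_mul, rad_abs hξ, rad_abs hξ, rad_abs hξ,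
      rad_abs hξ]; norm_num

lemma rad_exp (hξ : IsRademacherVector ξ) (j : Fin d) : ∫ ω, ξ ω j ∂ℙ = 0 := by
  have hA : MeasurableSet {ω | ξ ω j = 1} := (hξ.1 j) (measurableSet_singleton 1)
  have heq : (fun ω => ξ ω j) =
      fun ω => {ω | ξ ω j = 1}.indicator (fun _ => (2:ℝ)) ω - 1 := by
    funext ω
    by_cases hω : ξ ω j = 1
    · simp [Set.indicator, hω]; norm_num
    · rcases hξ.2.2.1 ω j with h | h
      · exact absurd h hω
      · simp [Set.indicator, hω, h]; norm_num
  rw [heq, integral_sub (by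
      refine (integrable_const (2:ℝ)).indicator hA) (integrable_const 1),
    integral_indicator_const _ hA, integral_const, measureReal_def, hξ.2.2.2 j]
  simp [ENNReal.toReal_div]

lemma rad_exp_mul (hξ : IsRademacherVector ξ) {j k : Fin d} (h : j ≠ k) :
    ∫ ω, ξ ω j * ξ ω k ∂ℙ = 0 := by
  have hind : IndepFun (fun ω => ξ ω j) (fun ω => ξ ω k) ℙ := hξ.2.1.indepFun h
  have := hind.integral_mul_eq_mul_integral (hξ.1 j).aestronglyMeasurable (hξ.1 k).aestronglyMeasurable
  calc ∫ ω, ξ ω j * ξ ω k ∂ℙ = ∫ ω, ((fun ω => ξ ω j) * fun ω => ξ ω k) ω ∂ℙ := rfl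
    _ = (∫ ω, ξ ω j ∂ℙ) * ∫ ω, ξ ω k ∂ℙ := this
    _ = 0 := by rw [rad_exp hξ, zero_mul]

lemma rad_exp4 (hξ : IsRademacherVector ξ) {j k l m : Fin d}
    (h : ¬((j = k ∧ l = m) ∨ (j = l ∧ k = m) ∨ (j = m ∧ k = l))) :
    ∫ ω, ξ ω j * ξ ω k * ξ ω l * ξ ω m ∂ℙ = 0 := by
  by_cases hjk : j = k
  · subst hjk
    have hlm : l ≠ m := fun he => h (Or.inl ⟨rfl, he⟩)
    have he : ∀ ω, ξ ω j * ξ ω j * ξ ω l * ξ ω m = ξ ω l * ξ ω m := fun ω => by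
      rw [rad_sq hξ, one_mul]
    simp only [he]
    exact rad_exp_mul hξ hlm
  · by_cases hjl : j = l
    · subst hjl
      have hkm : k ≠ m := fun he => h (Or.inr (Or.inl ⟨rfl, he⟩))
      have he : ∀ ω, ξ ω j * ξ ω k * ξ ω j * ξ ω m = ξ ω k * ξ ω m := fun ω => by
        have h2 := rad_sq hξ ω j; linear_combination (ξ ω k * ξ ω m) * h2
      simp only [he]
      exact rad_exp_mul hξ hkm
    · by_cases hjm : j = m
      · subst hjm
        have hkl : k ≠ l := fun he => h (Or.inr (Or.inr ⟨rfl, he⟩))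
        have he : ∀ ω, ξ ω j * ξ ω k * ξ ω l * ξ ω j = ξ ω k * ξ ω l := fun ω => by
          have h2 := rad_sq hξ ω j; linear_combination (ξ ω k * ξ ω l) * h2
        simp only [he]
        exact rad_exp_mul hξ hkl
      · by_cases hkl : k = l
        · subst hkl
          have he : ∀ ω, ξ ω j * ξ ω k * ξ ω k * ξ ω m = ξ ω j * ξ ω m := fun ω => by
            have h2 := rad_sq hξ ω k; linear_combination (ξ ω j * ξ ω m) * h2
          simp only [he]
          exact rad_exp_mul hξ hjm
        · by_cases hkm : k = m
          · subst hkm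
            have he : ∀ ω, ξ ω j * ξ ω k * ξ ω l * ξ ω k = ξ ω j * ξ ω l := fun ω => by
              have h2 := rad_sq hξ ω k; linear_combination (ξ ω j * ξ ω l) * h2
            simp only [he]
            exact rad_exp_mul hξ hjl
          · by_cases hlm : l = m
            · subst hlm
              have he : ∀ ω, ξ ω j * ξ ω k * ξ ω l * ξ ω l = ξ ω j * ξ ω k := fun ω => by
                have h2 := rad_sq hξ ω l; linear_combination (ξ ω j * ξ ω k) * h2
              simp only [he]
              exact rad_exp_mul hξ hjk
            · -- all four distinct
              have hind : IndepFun ((fun j ω => ξ ω j) j * (fun j ω => ξ ω j) k)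
                  ((fun j ω => ξ ω j) l * (fun j ω => ξ ω j) m) ℙ :=
                hξ.2.1.indepFun_mul_mul (fun i => hξ.1 i) j k l m hjl hjm hkl hkm
              have hmul := hind.integral_mul_eq_mul_integral
                ((hξ.1 j).mul (hξ.1 k)).aestronglyMeasurable
                ((hξ.1 l).mul (hξ.1 m)).aestronglyMeasurable
              have he : ∀ ω, ξ ω j * ξ ω k * ξ ω l * ξ ω m =
                  (((fun j ω => ξ ω j) j * (fun j ω => ξ ω j) k) *
                   ((fun j ω => ξ ω j) l * (fun j ω => ξ ω j) m)) ω := fun ω => by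
                simp [mul_assoc]
              simp only [he]
              calc ∫ ω, (((fun j ω => ξ ω j) j * (fun j ω => ξ ω j) k) *
                   ((fun j ω => ξ ω j) l * (fun j ω => ξ ω j) m)) ω ∂ℙ
                  = (∫ ω, ξ ω j * ξ ω k ∂ℙ) * ∫ ω, ξ ω l * ξ ω m ∂ℙ := hmul
                _ = 0 := by rw [rad_exp_mul hξ hjk, zero_mul]



lemma rad_prod4_le_one (hξ : IsRademacherVector ξ) (ω : Ω) (j k l m : Fin d) :
    ξ ω j * ξ ω k * ξ ω l * ξ ω m ≤ 1 := by
  rcases hξ.2.2.1 ω j with h1 | h1 <;> rcases hξ.2.2.1 ω k with h2 | h2 <;>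
    rcases hξ.2.2.1 ω l with h3 | h3 <;> rcases hξ.2.2.1 ω m with h4 | h4 <;>
    rw [h1, h2, h3, h4] <;> norm_num

lemma quad_term_le (hξ : IsRademacherVector ξ) (a : Fin d → ℝ) (j k l m : Fin d) :
    (a j * a k * a l * a m) * ∫ ω, ξ ω j * ξ ω k * ξ ω l * ξ ω m ∂ℙ ≤
      ((if j = k then (1:ℝ) else 0) * (a j * a k)) * ((if l = m then (1:ℝ) else 0) * (a l * a m))
    + ((if j = l then (1:ℝ) else 0) * (a j * a l)) * ((if k = m then (1:ℝ) else 0) * (a k * a m))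
    + ((if j = m then (1:ℝ) else 0) * (a j * a m)) * ((if k = l then (1:ℝ) else 0) * (a k * a l))
    := by
  by_cases hp : (j = k ∧ l = m) ∨ (j = l ∧ k = m) ∨ (j = m ∧ k = l)
  · have hI1 : ∫ ω, ξ ω j * ξ ω k * ξ ω l * ξ ω m ∂ℙ ≤ 1 := by
      calc ∫ ω, ξ ω j * ξ ω k * ξ ω l * ξ ω m ∂ℙ ≤ ∫ _ω, (1:ℝ) ∂ℙ :=
            integral_mono (rad_int4 hξ j k l m) (integrable_const 1)
              (fun ω => rad_prod4_le_one hξ ω j k l m)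
        _ = 1 := by simp
    rcases hp with ⟨h1, h2⟩ | ⟨h1, h2⟩ | ⟨h1, h2⟩ <;> subst h1 <;> subst h2 <;>
      simp only [eq_self_iff_true, if_true, one_mul]
    · have hc : (0:ℝ) ≤ a j * a j * a l * a l := by nlinarith [sq_nonneg (a j * a l)]
      have hkey := mul_le_mul_of_nonneg_left hI1 hc
      by_cases hjl : j = l
      · subst hjl; simp only [eq_self_iff_true, if_true, one_mul]; nlinarith [hkey]
      · simp only [if_neg hjl, zero_mul, mul_zero, add_zero]; nlinarith [hkey]
    · have hc : (0:ℝ) ≤ a j * a k * a j * a k := by nlinarith [sq_nonneg (a j * a k)]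
      have hkey := mul_le_mul_of_nonneg_left hI1 hc
      by_cases hjk : j = k
      · subst hjk; simp only [eq_self_iff_true, if_true, one_mul]; nlinarith [hkey]
      · simp only [if_neg hjk, if_neg (fun h => hjk h.symm : ¬k = j), zero_mul, mul_zero,
          add_zero, zero_add]
        nlinarith [hkey]
    · have hc : (0:ℝ) ≤ a j * a k * a k * a j := by nlinarith [sq_nonneg (a j * a k)]
      have hkey := mul_le_mul_of_nonneg_left hI1 hc
      by_cases hjk : j = k
      · subst hjk; simp only [eq_self_iff_true, if_true, one_mul]; nlinarith [hkey]
      · simp only [if_neg hjk, if_neg (fun h => hjk h.symm : ¬k = j), zero_mul, mul_zero,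
          add_zero, zero_add]
        nlinarith [hkey]
  · rw [rad_exp4 hξ hp, mul_zero]
    have e1 : ((if j = k then (1:ℝ) else 0) * (a j * a k)) *
        ((if l = m then (1:ℝ) else 0) * (a l * a m)) = 0 := by
      by_cases hjk : j = k
      · have : l ≠ m := fun he => hp (Or.inl ⟨hjk, he⟩)
        rw [if_neg this]; ring
      · rw [if_neg hjk]; ring
    have e2 : ((if j = l then (1:ℝ) else 0) * (a j * a l)) *
        ((if k = m then (1:ℝ) else 0) * (a k * a m)) = 0 := by
      by_cases hjl : j = l
      · have : k ≠ m := fun he => hp (Or.inr (Or.inl ⟨hjl, he⟩))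
        rw [if_neg this]; ring
      · rw [if_neg hjl]; ring
    have e3 : ((if j = m then (1:ℝ) else 0) * (a j * a m)) *
        ((if k = l then (1:ℝ) else 0) * (a k * a l)) = 0 := by
      by_cases hjm : j = m
      · have : k ≠ l := fun he => hp (Or.inr (Or.inr ⟨hjm, he⟩))
        rw [if_neg this]; ring
      · rw [if_neg hjm]; ring
    rw [e1, e2, e3]; norm_num

lemma diag_sum (a : Fin d → ℝ) (j : Fin d) :
    ∑ k, (if j = k then (1:ℝ) else 0) * (a j * a k) = a j ^ 2 := by
  simp only [ite_mul, one_mul, zero_mul, Finset.sum_ite_eq, Finset.mem_univ, if_true]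
  ring

lemma quad_factor (F G : Fin d → Fin d → ℝ) :
    ∑ j, ∑ k, ∑ l, ∑ m, F j k * G l m = (∑ j, ∑ k, F j k) * (∑ l, ∑ m, G l m) := by
  have h1 : ∀ j k, ∑ l, ∑ m, F j k * G l m = F j k * ∑ l, ∑ m, G l m := fun j k => by
    rw [Finset.mul_sum]
    exact Finset.sum_congr rfl fun l _ => (Finset.mul_sum _ _ _).symm
  simp only [h1, ← Finset.sum_mul]

lemma rad_fourth_moment (hξ : IsRademacherVector ξ) (a : Fin d → ℝ) :
    ∫ ω, (∑ j, a j * ξ ω j) ^ 4 ∂ℙ ≤ 3 * (∑ j, a j ^ 2) ^ 2 := by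
  have hexp : ∀ ω : Ω, (∑ j, a j * ξ ω j) ^ 4 =
      ∑ j, ∑ k, ∑ l, ∑ m, (a j * a k * a l * a m) * (ξ ω j * ξ ω k * ξ ω l * ξ ω m) := by
    intro ω
    have h4 : (∑ j, a j * ξ ω j) ^ 4 =
        (∑ j, a j * ξ ω j) * (∑ k, a k * ξ ω k) * (∑ l, a l * ξ ω l) *
          (∑ m, a m * ξ ω m) := by ring
    rw [h4]
    simp only [Finset.sum_mul, Finset.mul_sum]
    exact Finset.sum_congr rfl fun j _ => Finset.sum_congr rfl fun k _ =>
      Finset.sum_congr rfl fun l _ => Finset.sum_congr rfl fun m _ => by ring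
  have hint : ∀ j k l m : Fin d,
      Integrable (fun ω => (a j * a k * a l * a m) * (ξ ω j * ξ ω k * ξ ω l * ξ ω m)) ℙ :=
    fun j k l m => (rad_int4 hξ j k l m).const_mul _
  have step1 : ∫ ω, (∑ j, a j * ξ ω j) ^ 4 ∂ℙ =
      ∑ j, ∑ k, ∑ l, ∑ m,
        (a j * a k * a l * a m) * ∫ ω, ξ ω j * ξ ω k * ξ ω l * ξ ω m ∂ℙ := by
    simp only [hexp]
    rw [integral_finset_sum _ fun j _ => integrable_finset_sum _ fun k _ =>
      integrable_finset_sum _ fun l _ => integrable_finset_sum _ fun m _ => hint j k l m]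
    refine Finset.sum_congr rfl fun j _ => ?_
    rw [integral_finset_sum _ fun k _ => integrable_finset_sum _ fun l _ =>
      integrable_finset_sum _ fun m _ => hint j k l m]
    refine Finset.sum_congr rfl fun k _ => ?_
    rw [integral_finset_sum _ fun l _ => integrable_finset_sum _ fun m _ => hint j k l m]
    refine Finset.sum_congr rfl fun l _ => ?_
    rw [integral_finset_sum _ fun m _ => hint j k l m]
    exact Finset.sum_congr rfl fun m _ => MeasureTheory.integral_const_mul _ _
  set F : Fin d → Fin d → ℝ := fun j k => (if j = k then (1:ℝ) else 0) * (a j * a k) with hF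
  have hA : (∑ j, ∑ k, F j k) = ∑ j, a j ^ 2 :=
    Finset.sum_congr rfl fun j _ => diag_sum a j
  have step2 : ∑ j, ∑ k, ∑ l, ∑ m,
        (a j * a k * a l * a m) * ∫ ω, ξ ω j * ξ ω k * ξ ω l * ξ ω m ∂ℙ ≤
      ∑ j, ∑ k, ∑ l, ∑ m, (F j k * F l m + F j l * F k m + F j m * F k l) :=
    Finset.sum_le_sum fun j _ => Finset.sum_le_sum fun k _ => Finset.sum_le_sum fun l _ =>
      Finset.sum_le_sum fun m _ => quad_term_le hξ a j k l m
  have step3 : ∑ j, ∑ k, ∑ l, ∑ m, (F j k * F l m + F j l * F k m + F j m * F k l) =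
      3 * (∑ j, a j ^ 2) ^ 2 := by
    simp only [Finset.sum_add_distrib]
    have s1 : ∑ j, ∑ k, ∑ l, ∑ m, F j k * F l m = (∑ j, a j ^ 2) * (∑ j, a j ^ 2) := by
      rw [quad_factor, hA]
    have s2 : ∑ j, ∑ k, ∑ l, ∑ m, F j l * F k m = (∑ j, a j ^ 2) * (∑ j, a j ^ 2) := by
      have hcomm : ∀ j : Fin d, ∑ k, ∑ l, ∑ m, F j l * F k m =
          ∑ l, ∑ k, ∑ m, F j l * F k m := fun j => Finset.sum_comm
      simp only [hcomm]
      rw [quad_factor, hA]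
    have s3 : ∑ j, ∑ k, ∑ l, ∑ m, F j m * F k l = (∑ j, a j ^ 2) * (∑ j, a j ^ 2) := by
      have hc1 : ∀ (j k : Fin d), ∑ l, ∑ m, F j m * F k l =
          ∑ m, ∑ l, F j m * F k l := fun j k => Finset.sum_comm
      have hc2 : ∀ j : Fin d, ∑ k, ∑ m, ∑ l, F j m * F k l =
          ∑ m, ∑ k, ∑ l, F j m * F k l := fun j => Finset.sum_comm
      simp only [hc1, hc2]
      rw [quad_factor, hA]
    rw [s1, s2, s3]; ring
  rw [step1]
  rw [step3] at step2
  exact step2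

end Aux

/-- Expected ℓ₄ norm bound: `E ‖H D x‖₄ ≤ 3^{1/4} d^{-1/4}` for a unit vector
`x` and a matrix `H` with entries of absolute value `d^{-1/2}`. -/




theorem expected_l4_norm_HDx_le
    {Ω : Type} [MeasureSpace Ω] [IsProbabilityMeasure (ℙ : Measure Ω)]
    {d : ℕ} (H : Matrix (Fin d) (Fin d) ℝ)
    (hH : ∀ i j, |H i j| = (d : ℝ) ^ (-(1 : ℝ) / 2))
    (x : Fin d → ℝ) (hx : lpNorm 2 x = 1)
    (ξ : Ω → Fin d → ℝ) (hξ : IsRademacherVector ξ) :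
    ∫ ω, lpNorm 4 (H.mulVec (ξ ω * x)) ∂ℙ ≤
      (3 : ℝ) ^ ((1 : ℝ) / 4) * (d : ℝ) ^ (-(1 : ℝ) / 4) := by
  rcases Nat.eq_zero_or_pos d with hd0 | hdpos
  · exfalso
    subst hd0
    unfold _root_.lpNorm at hx
    simp only [Finset.univ_eq_empty, Finset.sum_empty] at hx
    rw [Real.zero_rpow (by norm_num)] at hx
    norm_num at hx
  have hd : (0:ℝ) < d := Nat.cast_pos.mpr hdpos
  set a : Fin d → Fin d → ℝ := fun i j => H i j * x j with ha
  set S : Fin d → Ω → ℝ := fun i ω => ∑ j, a i j * ξ ω j with hSdef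
  set Z : Ω → ℝ := fun ω => ∑ i, (S i ω) ^ 4 with hZdef
  have hmv : ∀ (ω : Ω) (i : Fin d), H.mulVec (ξ ω * x) i = S i ω := by
    intro ω i
    simp only [Matrix.mulVec, dotProduct, hSdef, ha, Pi.mul_apply]
    exact Finset.sum_congr rfl fun j _ => by ring
  have hZ0 : ∀ ω, 0 ≤ Z ω := fun ω => Finset.sum_nonneg fun i _ => by positivity
  have hpow4 : ∀ s : ℝ, |s| ^ (4:ℝ) = s ^ (4:ℕ) := by
    intro s
    rw [show (4:ℝ) = ((4:ℕ):ℝ) by norm_num, Real.rpow_natCast, ← abs_pow,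
      abs_of_nonneg (by positivity)]
  have hY : ∀ ω, lpNorm 4 (H.mulVec (ξ ω * x)) = Z ω ^ ((1:ℝ)/4) := by
    intro ω
    unfold _root_.lpNorm
    congr 1
    refine Finset.sum_congr rfl fun i _ => ?_
    rw [hmv ω i, hpow4]
  -- measurability and boundedness
  have hSm : ∀ i, Measurable (S i) := fun i =>
    Finset.measurable_sum _ fun j _ => ((hξ.1 j).const_mul _)
  have hZm : Measurable Z := Finset.measurable_sum _ fun i _ => (hSm i).pow_const 4
  set B : ℝ := ∑ i, (∑ j, |a i j|) ^ 4 with hB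
  have hZB : ∀ ω, Z ω ≤ B := by
    intro ω
    refine Finset.sum_le_sum fun i _ => ?_
    have habs : |S i ω| ≤ ∑ j, |a i j| := by
      calc |S i ω| ≤ ∑ j, |a i j * ξ ω j| := Finset.abs_sum_le_sum_abs _ _
        _ = ∑ j, |a i j| := Finset.sum_congr rfl fun j _ => by
            rw [abs_mul, rad_abs hξ, mul_one]
    calc S i ω ^ 4 = |S i ω| ^ 4 := by rw [← abs_pow, abs_of_nonneg (by positivity)]
      _ ≤ (∑ j, |a i j|) ^ 4 := by
          exact pow_le_pow_left₀ (abs_nonneg _) habs 4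
  set f : Ω → ℝ := fun ω => Z ω ^ ((1:ℝ)/4) with hf
  have hf0 : ∀ ω, 0 ≤ f ω := fun ω => Real.rpow_nonneg (hZ0 ω) _
  have hfm : Measurable f :=
    ((continuous_id.rpow_const (fun _ => Or.inr (by norm_num))).measurable).comp hZm
  have hfmem : MemLp f (ENNReal.ofReal 4) ℙ := by
    refine MemLp.mono_exponent ?_ le_top
    refine memLp_top_of_bound hfm.aestronglyMeasurable (B ^ ((1:ℝ)/4)) ?_
    refine Filter.Eventually.of_forall fun ω => ?_
    rw [Real.norm_eq_abs, abs_of_nonneg (hf0 ω)]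
    exact Real.rpow_le_rpow (hZ0 ω) (hZB ω) (by norm_num)
  have hpq : Real.HolderConjugate 4 (4/3) := by constructor <;> norm_num
  have hZint : Integrable Z ℙ := by
    refine (integrable_const B).mono' hZm.aestronglyMeasurable ?_
    refine Filter.Eventually.of_forall fun ω => ?_
    rw [Real.norm_eq_abs, abs_of_nonneg (hZ0 ω)]
    exact hZB ω
  have hHolder : ∫ ω, f ω ∂ℙ ≤ (∫ ω, Z ω ∂ℙ) ^ ((1:ℝ)/4) := by
    have h := integral_mul_le_Lp_mul_Lq_of_nonneg hpq
      (Filter.Eventually.of_forall hf0)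
      (Filter.Eventually.of_forall (fun ω => zero_le_one (α := ℝ)))
      hfmem (memLp_const (1:ℝ))
    simp only [mul_one] at h
    have h1 : ∀ ω : Ω, f ω ^ (4:ℝ) = Z ω := by
      intro ω
      show (Z ω ^ ((1:ℝ)/4)) ^ (4:ℝ) = Z ω
      rw [← Real.rpow_mul (hZ0 ω)]
      norm_num
    have h2 : ∫ (ω : Ω), (1:ℝ) ^ (4/3:ℝ) ∂ℙ = 1 := by
      simp [Real.one_rpow]
    rw [h2] at h
    simp only [h1, Real.one_rpow, mul_one] at h
    exact h
  -- moment bound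
  have hx2 : ∑ j, x j ^ 2 = 1 := by
    unfold _root_.lpNorm at hx
    have hs : ∑ j, |x j| ^ (2:ℝ) = ∑ j, x j ^ 2 := Finset.sum_congr rfl fun j _ => by
      rw [show (2:ℝ) = ((2:ℕ):ℝ) by norm_num, Real.rpow_natCast, ← abs_pow,
        abs_of_nonneg (by positivity)]
    rw [hs] at hx
    have hnn : (0:ℝ) ≤ ∑ j, x j ^ 2 := by positivity
    have := congrArg (fun t : ℝ => t ^ (2:ℝ)) hx
    rw [← Real.rpow_mul hnn] at this
    norm_num at this
    exact this
  have hsum_sq : ∀ i, ∑ j, a i j ^ 2 = 1 / d := by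
    intro i
    have hHij : ∀ j, (H i j) ^ 2 = 1 / d := by
      intro j
      rw [← sq_abs, hH i j, ← Real.rpow_natCast ((d:ℝ) ^ (-(1:ℝ)/2)) 2,
        ← Real.rpow_mul hd.le]
      norm_num [Real.rpow_neg_one]
    calc ∑ j, a i j ^ 2 = ∑ j, (1/d) * x j ^ 2 := Finset.sum_congr rfl fun j _ => by
          rw [ha]; simp only [mul_pow]; rw [hHij j]
      _ = (1/d) * ∑ j, x j ^ 2 := by rw [Finset.mul_sum]
      _ = 1 / d := by rw [hx2, mul_one]
  have hint4 : ∀ i, Integrable (fun ω => (S i ω) ^ 4) ℙ := by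
    intro i
    refine (integrable_const ((∑ j, |a i j|) ^ 4)).mono'
      ((hSm i).pow_const 4).aestronglyMeasurable ?_
    refine Filter.Eventually.of_forall fun ω => ?_
    rw [Real.norm_eq_abs, abs_of_nonneg (by positivity)]
    have habs : |S i ω| ≤ ∑ j, |a i j| := by
      calc |S i ω| ≤ ∑ j, |a i j * ξ ω j| := Finset.abs_sum_le_sum_abs _ _
        _ = ∑ j, |a i j| := Finset.sum_congr rfl fun j _ => by
            rw [abs_mul, rad_abs hξ, mul_one]
    calc S i ω ^ 4 = |S i ω| ^ 4 := by rw [← abs_pow, abs_of_nonneg (by positivity)]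
      _ ≤ (∑ j, |a i j|) ^ 4 := pow_le_pow_left₀ (abs_nonneg _) habs 4
  have hZle : ∫ ω, Z ω ∂ℙ ≤ 3 / d := by
    rw [hZdef]
    rw [integral_finset_sum _ fun i _ => hint4 i]
    calc ∑ i, ∫ ω, (S i ω) ^ 4 ∂ℙ ≤ ∑ i : Fin d, 3 * ((1:ℝ)/d) ^ 2 := by
          refine Finset.sum_le_sum fun i _ => ?_
          have := rad_fourth_moment hξ (a i)
          rwa [hsum_sq i] at this
      _ = d * (3 * ((1:ℝ)/d) ^ 2) := by
          rw [Finset.sum_const, Finset.card_univ, Fintype.card_fin, nsmul_eq_mul]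
      _ = 3 / d := by field_simp
  calc ∫ ω, lpNorm 4 (H.mulVec (ξ ω * x)) ∂ℙ = ∫ ω, f ω ∂ℙ := by
        simp only [hY]; rfl
    _ ≤ (∫ ω, Z ω ∂ℙ) ^ ((1:ℝ)/4) := hHolder
    _ ≤ ((3:ℝ) / d) ^ ((1:ℝ)/4) :=
        Real.rpow_le_rpow (integral_nonneg hZ0) hZle (by norm_num)
    _ = (3 : ℝ) ^ ((1 : ℝ) / 4) * (d : ℝ) ^ (-(1 : ℝ) / 4) := by
        rw [Real.div_rpow (by norm_num) hd.le, show (-(1:ℝ)/4) = -((1:ℝ)/4) by ring,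
          Real.rpow_neg hd.le, div_eq_mul_inv]
end

section
/- For every p ∈ [1,2], p · ∫₀^∞ s^{p−1} / (1 + s³) ds ≤ 4π / (3√3). -/
open MeasureTheory ProbabilityTheory Real Finset

section AuxIntegralBoundP

-- weighted AM-GM
lemma aux_rpow_le {t a : ℝ} (ht : 0 ≤ t) (ha : 0 ≤ a) (ha1 : a ≤ 1) :
    t ^ a ≤ a * t + (1 - a) := by
  have h := Real.geom_mean_le_arith_mean2_weighted ha (by linarith : (0:ℝ) ≤ 1 - a) ht
    zero_le_one (by ring)
  simpa using h

lemma aux_quad_pos (s : ℝ) : 0 < s ^ 2 - s + 1 := by nlinarith [sq_nonneg (s - 1/2), sq_nonneg s]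

lemma aux_cube_pos {s : ℝ} (hs : 0 < s) : 0 < 1 + s ^ 3 := by positivity

-- FTC piece
lemma aux_hasDeriv (x : ℝ) :
    HasDerivAt (fun x : ℝ => (4 / Real.sqrt 3) * Real.arctan ((2 * x - 1) / Real.sqrt 3))
      (2 / (x ^ 2 - x + 1)) x := by
  have h3 : (0:ℝ) < Real.sqrt 3 := Real.sqrt_pos.2 (by norm_num)
  have h3' : Real.sqrt 3 ^ 2 = 3 := Real.sq_sqrt (by norm_num)
  have hinner : HasDerivAt (fun x : ℝ => (2 * x - 1) / Real.sqrt 3) (2 / Real.sqrt 3) x := by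
    have : HasDerivAt (fun x : ℝ => 2 * x - 1) 2 x := by
      simpa using ((hasDerivAt_id x).const_mul 2).sub_const 1
    simpa [div_eq_mul_inv] using this.mul_const (Real.sqrt 3)⁻¹
  have harctan := (Real.hasDerivAt_arctan ((2 * x - 1) / Real.sqrt 3)).comp x hinner
  have := harctan.const_mul (4 / Real.sqrt 3)
  refine this.congr_deriv ?_
  symm
  have hne : Real.sqrt 3 ≠ 0 := ne_of_gt h3
  field_simp
  rw [div_eq_iff (ne_of_gt (by nlinarith [aux_quad_pos x] : (0:ℝ) < x * (x - 1) + 1))]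
  nlinarith [aux_quad_pos x, h3']

lemma aux_integral_quad :
    ∫ s in Set.Ioo (0:ℝ) 1, 2 / (s ^ 2 - s + 1) = 4 * π / (3 * Real.sqrt 3) := by
  have hcont : Continuous fun s : ℝ => 2 / (s ^ 2 - s + 1) := by
    apply Continuous.div (by continuity) (by continuity)
    intro x; exact ne_of_gt (aux_quad_pos x)
  have h01 : (0:ℝ) ≤ 1 := by norm_num
  have := intervalIntegral.integral_eq_sub_of_hasDerivAt
    (f := fun x : ℝ => (4 / Real.sqrt 3) * Real.arctan ((2 * x - 1) / Real.sqrt 3))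
    (fun x _ => aux_hasDeriv x) (hcont.intervalIntegrable 0 1)
  rw [intervalIntegral.integral_of_le h01, integral_Ioc_eq_integral_Ioo] at this
  rw [this]
  have h3 : (0:ℝ) < Real.sqrt 3 := Real.sqrt_pos.2 (by norm_num)
  have ha : Real.arctan (1 / Real.sqrt 3) = π / 6 := by
    rw [← Real.tan_pi_div_six, Real.arctan_tan] <;> nlinarith [Real.pi_pos]
  have e1 : (2*(1:ℝ)-1)/Real.sqrt 3 = 1/Real.sqrt 3 := by norm_num
  have e0 : (2*(0:ℝ)-1)/Real.sqrt 3 = -(1/Real.sqrt 3) := by ring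
  simp only [e1, e0, Real.arctan_neg, ha]
  field_simp
  ring

lemma aux_meas (q : ℝ) : Measurable fun s : ℝ => s ^ q / (1 + s ^ 3) := by
  fun_prop

lemma aux_int_Ioc (q : ℝ) (hq : 0 ≤ q) :
    IntegrableOn (fun s : ℝ => s ^ q / (1 + s ^ 3)) (Set.Ioc 0 1) := by
  apply Integrable.mono' (integrable_const (1:ℝ)) ((aux_meas q).aestronglyMeasurable.restrict)
  filter_upwards [ae_restrict_mem measurableSet_Ioc] with s hs
  have hs0 : 0 < s := hs.1
  have hc := aux_cube_pos hs0
  rw [Real.norm_eq_abs, abs_of_nonneg (by positivity)]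
  have h1 : s ^ q ≤ 1 := Real.rpow_le_one hs0.le hs.2 hq
  rw [div_le_one hc]
  nlinarith [pow_pos hs0 3]

lemma aux_int_Ioi {p : ℝ} (hp1 : 1 ≤ p) (hp2 : p ≤ 2) :
    IntegrableOn (fun s : ℝ => s ^ (p - 1) / (1 + s ^ 3)) (Set.Ioi 1) := by
  apply Integrable.mono' (integrableOn_Ioi_rpow_of_lt (by norm_num : (-2:ℝ) < -1) one_pos)
    ((aux_meas _).aestronglyMeasurable.restrict)
  filter_upwards [ae_restrict_mem measurableSet_Ioi] with s hs
  have hs1 : (1:ℝ) ≤ s := le_of_lt hs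
  have hs0 : (0:ℝ) < s := lt_of_lt_of_le one_pos hs1
  have hc := aux_cube_pos hs0
  rw [Real.norm_eq_abs, abs_of_nonneg (by positivity)]
  have h3 : (0:ℝ) < s ^ 3 := by positivity
  have hApos : (0:ℝ) ≤ s ^ (p - 1) := Real.rpow_nonneg hs0.le _
  calc s ^ (p - 1) / (1 + s ^ 3) ≤ s ^ (p - 1) / s ^ 3 := by
        rw [div_le_div_iff₀ hc h3]; nlinarith
    _ = s ^ (p - 4) := by
        rw [show (s:ℝ) ^ (3:ℕ) = s ^ ((3:ℕ):ℝ) from (Real.rpow_natCast s 3).symm,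
          ← Real.rpow_sub hs0, show p - 1 - (3:ℕ) = p - 4 by push_cast; ring]
    _ ≤ s ^ (-2 : ℝ) := Real.rpow_le_rpow_of_exponent_le hs1 (by linarith)

lemma aux_subst {p : ℝ} :
    ∫ s in Set.Ioi (1:ℝ), s ^ (p - 1) / (1 + s ^ 3) =
      ∫ s in Set.Ioo (0:ℝ) 1, s ^ (2 - p) / (1 + s ^ 3) := by
  have himg : (fun x : ℝ => x⁻¹) '' Set.Ioo 0 1 = Set.Ioi 1 := by
    ext y
    simp only [Set.mem_image, Set.mem_Ioo, Set.mem_Ioi]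
    constructor
    · rintro ⟨x, ⟨hx0, hx1⟩, rfl⟩
      exact (one_lt_inv_iff₀ ..).mpr ⟨hx0, hx1⟩
    · intro hy
      have hy0 : 0 < y := lt_trans one_pos hy
      exact ⟨y⁻¹, ⟨inv_pos.2 hy0, inv_lt_one_of_one_lt₀ hy⟩, inv_inv y⟩
  rw [← himg, integral_image_eq_integral_abs_deriv_smul measurableSet_Ioo
    (fun x hx => (hasDerivAt_inv (ne_of_gt hx.1)).hasDerivWithinAt) inv_injective.injOn]
  apply setIntegral_congr_fun measurableSet_Ioo
  intro x hx
  obtain ⟨hx0, _⟩ := hx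
  have hc := aux_cube_pos hx0
  have hA : (0:ℝ) < x ^ (p - 1) := Real.rpow_pos_of_pos hx0 _
  have hB : (0:ℝ) < x ^ (2 - p) := Real.rpow_pos_of_pos hx0 _
  have hAB : x ^ (p - 1) * x ^ (2 - p) = x := by
    rw [← Real.rpow_add hx0]; norm_num
  simp only [smul_eq_mul, abs_neg]
  rw [abs_of_nonneg (by positivity : (0:ℝ) ≤ ((x:ℝ) ^ 2)⁻¹),
    Real.inv_rpow hx0.le, inv_pow]
  have hx3 : (0:ℝ) < x ^ 3 := by positivity
  have hden : (0:ℝ) < 1 + (x ^ 3)⁻¹ := by positivity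
  rw [eq_div_iff hc.ne']
  field_simp
  linear_combination (-(x^3+1)) * hAB

end AuxIntegralBoundP

/-- For `p ∈ [1,2]`, `p ∫₀^∞ s^{p-1}/(1+s³) ds ≤ 4π/(3√3)`. -/
theorem integral_bound_p
    (p : ℝ) (hp1 : 1 ≤ p) (hp2 : p ≤ 2) :
    p * ∫ s in Set.Ioi (0 : ℝ), s ^ (p - 1) / (1 + s ^ 3) ≤
      4 * π / (3 * Real.sqrt 3) := by
  have hI1 : IntegrableOn (fun s : ℝ => s ^ (p - 1) / (1 + s ^ 3)) (Set.Ioc 0 1) :=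
    aux_int_Ioc _ (by linarith)
  have hI2 := aux_int_Ioi hp1 hp2
  have hG : IntegrableOn (fun s : ℝ => s ^ (2 - p) / (1 + s ^ 3)) (Set.Ioo 0 1) :=
    (aux_int_Ioc (2 - p) (by linarith)).mono_set Set.Ioo_subset_Ioc_self
  have hF : IntegrableOn (fun s : ℝ => s ^ (p - 1) / (1 + s ^ 3)) (Set.Ioo 0 1) :=
    hI1.mono_set Set.Ioo_subset_Ioc_self
  have hsplit : (∫ s in Set.Ioi (0:ℝ), s ^ (p - 1) / (1 + s ^ 3))
      = (∫ s in Set.Ioo (0:ℝ) 1, s ^ (p - 1) / (1 + s ^ 3))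
        + ∫ s in Set.Ioo (0:ℝ) 1, s ^ (2 - p) / (1 + s ^ 3) := by
    rw [← Set.Ioc_union_Ioi_eq_Ioi (by norm_num : (0:ℝ) ≤ 1),
      setIntegral_union (Set.Ioc_disjoint_Ioi le_rfl) measurableSet_Ioi hI1 hI2,
      integral_Ioc_eq_integral_Ioo, aux_subst]
  have hcont : Continuous fun s : ℝ => 2 / (s ^ 2 - s + 1) := by
    apply Continuous.div (by continuity) (by continuity)
    intro x; exact ne_of_gt (aux_quad_pos x)
  calc p * ∫ s in Set.Ioi (0:ℝ), s ^ (p - 1) / (1 + s ^ 3)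
      = ∫ s in Set.Ioo (0:ℝ) 1,
          (p * (s ^ (p - 1) / (1 + s ^ 3)) + p * (s ^ (2 - p) / (1 + s ^ 3))) := by
        rw [hsplit, mul_add, ← integral_const_mul, ← integral_const_mul,
          ← integral_add (hF.const_mul p) (hG.const_mul p)]
    _ ≤ ∫ s in Set.Ioo (0:ℝ) 1, 2 / (s ^ 2 - s + 1) := by
        apply setIntegral_mono_on ((hF.const_mul p).add (hG.const_mul p))
          ((hcont.integrableOn_Icc).mono_set Set.Ioo_subset_Icc_self) measurableSet_Ioo
        intro s hs
        obtain ⟨hs0, hs1⟩ := hs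
        have hc := aux_cube_pos hs0
        have hq := aux_quad_pos s
        have h1 := aux_rpow_le hs0.le (by linarith : (0:ℝ) ≤ p - 1) (by linarith : p - 1 ≤ 1)
        have h2 := aux_rpow_le hs0.le (by linarith : (0:ℝ) ≤ 2 - p) (by linarith : 2 - p ≤ 1)
        have hA : (0:ℝ) ≤ s ^ (p - 1) := Real.rpow_nonneg hs0.le _
        have hB : (0:ℝ) ≤ s ^ (2 - p) := Real.rpow_nonneg hs0.le _
        have hrepr : 2 / (s ^ 2 - s + 1) = (2 * (1 + s)) / (1 + s ^ 3) := by
          rw [div_eq_div_iff hq.ne' hc.ne']; ring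
        have hEq : p * (s ^ (p - 1) / (1 + s ^ 3)) + p * (s ^ (2 - p) / (1 + s ^ 3))
            = (p * s ^ (p - 1) + p * s ^ (2 - p)) / (1 + s ^ 3) := by ring
        simp only [Pi.add_apply]
        rw [hEq, hrepr]
        gcongr
        nlinarith [mul_le_mul_of_nonneg_left (add_le_add h1 h2) (by linarith : (0:ℝ) ≤ p),
          mul_nonneg (by linarith : (0:ℝ) ≤ 2 - p) (by linarith : (0:ℝ) ≤ s + 1)]
    _ = 4 * π / (3 * Real.sqrt 3) := aux_integral_quad
end
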